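/- arXiv:1906.06988 — 11 statements merged into one kernel-verified Lean document; each statement's English description precedes it below -/
import Mathlib

section
/- In a CAT(0) space, the Karcher mean σ of points x_0, …, x_{n-1} satisfies d(σ, y) ≤ (1/n) Σ_{i=0}^{n-1} d(x_i, y) for every point y. -/
open Finset Filter Metric

/-- A geodesic interpolation structure on a metric space making it a CAT(0) space:
`g x y t` is the point `(1-t)x ⊕ ty` on the geodesic from `x` to `y`, and the squared
distance is strongly convex along geodesics (CN-inequality). -/
structure GeodesicStructure (X : Type*) [MetricSpace X] where
  g : X → X → ℝ → X
  dist_left : ∀ x y : X, ∀ t ∈ Set.Icc (0:ℝ) 1, dist x (g x y t) = t * dist x y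
  dist_right : ∀ x y : X, ∀ t ∈ Set.Icc (0:ℝ) 1, dist y (g x y t) = (1 - t) * dist x y
  cn : ∀ x y z : X, ∀ t ∈ Set.Icc (0:ℝ) 1,
    dist z (g x y t) ^ 2 ≤ (1 - t) * dist z x ^ 2 + t * dist z y ^ 2
      - t * (1 - t) * dist x y ^ 2

/-- The Karcher mean `σ` of `x₀,…,x_{n-1}` satisfies `d(σ,y) ≤ (1/n) Σ d(xᵢ,y)`. -/
theorem karcher_mean_dist_ineq {X : Type*} [MetricSpace X] [CompleteSpace X]
    (G : GeodesicStructure X)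
    (n : ℕ) (hn : 0 < n) (x : ℕ → X) (σ : X)
    (hσ : ∀ z : X, (1 / n : ℝ) * ∑ i ∈ Finset.range n, dist (x i) σ ^ 2
      ≤ (1 / n : ℝ) * ∑ i ∈ Finset.range n, dist (x i) z ^ 2)
    (y : X) :
    dist σ y ≤ (1 / n : ℝ) * ∑ i ∈ Finset.range n, dist (x i) y := by
  have hN : (0:ℝ) < n := Nat.cast_pos.mpr hn
  set A := ∑ i ∈ Finset.range n, dist (x i) σ ^ 2 with hA
  set B := ∑ i ∈ Finset.range n, dist (x i) y ^ 2 with hB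
  set D := dist σ y with hD
  set S := ∑ i ∈ Finset.range n, dist (x i) y with hS
  -- Step 1: Karcher-type inequality for each small t
  have key : ∀ t : ℝ, 0 < t → t ≤ 1 → A + (n:ℝ) * (1 - t) * D ^ 2 ≤ B := by
    intro t ht0 ht1
    have htI : t ∈ Set.Icc (0:ℝ) 1 := ⟨le_of_lt ht0, ht1⟩
    have hsum : ∑ i ∈ Finset.range n, dist (x i) (G.g σ y t) ^ 2
        ≤ (1 - t) * A + t * B - (n:ℝ) * (t * (1 - t) * D ^ 2) := by
      calc ∑ i ∈ Finset.range n, dist (x i) (G.g σ y t) ^ 2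
          ≤ ∑ i ∈ Finset.range n, ((1 - t) * dist (x i) σ ^ 2 + t * dist (x i) y ^ 2
              - t * (1 - t) * D ^ 2) :=
            Finset.sum_le_sum fun i _ => G.cn σ y (x i) t htI
        _ = (1 - t) * A + t * B - (n:ℝ) * (t * (1 - t) * D ^ 2) := by
            rw [Finset.sum_sub_distrib, Finset.sum_add_distrib, ← Finset.mul_sum,
              ← Finset.mul_sum, Finset.sum_const, Finset.card_range, nsmul_eq_mul]
    have h1 := hσ (G.g σ y t)
    have h2 : A ≤ ∑ i ∈ Finset.range n, dist (x i) (G.g σ y t) ^ 2 := by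
      have hpos : (0:ℝ) < 1 / n := by positivity
      exact (mul_le_mul_iff_right₀ hpos).mp h1
    have h3 : t * (A + (n:ℝ) * (1 - t) * D ^ 2) ≤ t * B := by nlinarith
    exact (mul_le_mul_iff_right₀ ht0).mp h3
  -- Step 2: pass to the limit t → 0⁺
  have hlim : A + (n:ℝ) * D ^ 2 ≤ B := by
    have hcont : Filter.Tendsto (fun t : ℝ => A + (n:ℝ) * (1 - t) * D ^ 2)
        (nhdsWithin 0 (Set.Ioi 0)) (nhds (A + (n:ℝ) * D ^ 2)) := by
      have : Continuous (fun t : ℝ => A + (n:ℝ) * (1 - t) * D ^ 2) := by continuity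
      have h0 := this.tendsto 0
      simp only [sub_zero, mul_one] at h0
      exact h0.mono_left nhdsWithin_le_nhds
    refine le_of_tendsto hcont ?_
    filter_upwards [Ioc_mem_nhdsGT_of_mem (by norm_num : (0:ℝ) ∈ Set.Ico (0:ℝ) 1)] with t ht
    exact key t ht.1 ht.2
  -- Step 3: pointwise bound from triangle inequality
  have hpt : ∀ i, dist (x i) y ^ 2 - dist (x i) σ ^ 2 ≤ 2 * D * dist (x i) y - D ^ 2 := by
    intro i
    have h1 : D - dist (x i) y ≤ dist (x i) σ := by
      have h := dist_triangle σ (x i) y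
      rw [dist_comm σ (x i)] at h
      simp only [hD] at *
      linarith [dist_comm σ (x i)]
    have h2 : dist (x i) y - D ≤ dist (x i) σ := by
      have h := dist_triangle (x i) σ y
      linarith
    nlinarith [mul_nonneg (by linarith : (0:ℝ) ≤ dist (x i) σ - (D - dist (x i) y))
      (by linarith : (0:ℝ) ≤ dist (x i) σ + (D - dist (x i) y))]
  have hsum2 : B - A ≤ 2 * D * S - (n:ℝ) * D ^ 2 := by
    have := Finset.sum_le_sum fun i (_ : i ∈ Finset.range n) => hpt i
    rw [Finset.sum_sub_distrib, Finset.sum_sub_distrib, ← Finset.mul_sum,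
      Finset.sum_const, Finset.card_range, nsmul_eq_mul] at this
    exact this
  -- Conclude
  have hfin : (n:ℝ) * D ^ 2 ≤ D * S := by nlinarith
  rcases eq_or_lt_of_le (dist_nonneg : (0:ℝ) ≤ D) with hD0 | hD0
  · rw [show D = 0 from hD0.symm]
    have : (0:ℝ) ≤ S := Finset.sum_nonneg fun i _ => dist_nonneg
    positivity
  · have h4 : D * ((n:ℝ) * D) ≤ D * S := by nlinarith
    have h5 : (n:ℝ) * D ≤ S := (mul_le_mul_iff_right₀ hD0).mp h4
    rw [one_div, inv_mul_eq_div, le_div_iff₀ hN]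
    linarith
end

section
/- Let {x_n} be a sequence in a Hadamard space converging to y. Then for every ε > 0 there is N such that for all n ≥ N and all k ≥ 0, d(σ_n^k, y) < ε, where σ_n^k is the Karcher mean of x_k, …, x_{k+n-1}. That is, convergence implies almost convergence (uniform convergence of the Vallée-Poussin means in k). -/
open Finset Filter Metric

/-- Convergence implies almost convergence: if `xₙ → y` then the Vallée-Poussin
Karcher means `σ n k` converge to `y` uniformly in `k`. -/
theorem convergence_implies_almost_convergence {X : Type*} [MetricSpace X] [CompleteSpace X]
    (G : GeodesicStructure X) (x : ℕ → X) (σ : ℕ → ℕ → X)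
    (hσ : ∀ n k : ℕ, 1 ≤ n → ∀ z : X,
      (1 / n : ℝ) * ∑ i ∈ Finset.range n, dist (x (k + i)) (σ n k) ^ 2
        ≤ (1 / n : ℝ) * ∑ i ∈ Finset.range n, dist (x (k + i)) z ^ 2)
    (y : X) (hx : Tendsto x atTop (nhds y)) :
    ∀ ε > (0:ℝ), ∃ N : ℕ, ∀ n ≥ N, ∀ k : ℕ, dist (σ n k) y < ε := by
  classical
  -- Key inequality: n * d(σ n k, y)² ≤ ∑ d(x (k+i), y)²
  have key : ∀ n k : ℕ, 1 ≤ n →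
      (n : ℝ) * dist (σ n k) y ^ 2 ≤ ∑ i ∈ Finset.range n, dist (x (k + i)) y ^ 2 := by
    intro n k hn
    have hnpos : (0:ℝ) < n := by exact_mod_cast hn
    set S := ∑ i ∈ Finset.range n, dist (x (k + i)) (σ n k) ^ 2 with hS
    set T := ∑ i ∈ Finset.range n, dist (x (k + i)) y ^ 2 with hT
    set D := dist (σ n k) y ^ 2 with hDdef
    have hS0 : 0 ≤ S := Finset.sum_nonneg fun i _ => by positivity
    have hT0 : 0 ≤ T := Finset.sum_nonneg fun i _ => by positivity
    have hD0 : 0 ≤ D := by positivity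
    have hstep : ∀ t : ℝ, 0 < t → t ≤ 1 → (1 - t) * ((n : ℝ) * D) ≤ T := by
      intro t ht0 ht1
      have htI : t ∈ Set.Icc (0:ℝ) 1 := ⟨ht0.le, ht1⟩
      have h1 := hσ n k hn (G.g (σ n k) y t)
      have h1' : S ≤ ∑ i ∈ Finset.range n, dist (x (k + i)) (G.g (σ n k) y t) ^ 2 :=
        le_of_mul_le_mul_left h1 (by positivity : (0:ℝ) < 1 / n)
      have h2 : ∑ i ∈ Finset.range n, dist (x (k + i)) (G.g (σ n k) y t) ^ 2
          ≤ (1 - t) * S + t * T - (n : ℝ) * (t * (1 - t) * D) := by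
        calc ∑ i ∈ Finset.range n, dist (x (k + i)) (G.g (σ n k) y t) ^ 2
            ≤ ∑ i ∈ Finset.range n, ((1 - t) * dist (x (k + i)) (σ n k) ^ 2
                + t * dist (x (k + i)) y ^ 2 - t * (1 - t) * D) :=
              Finset.sum_le_sum fun i _ => G.cn (σ n k) y (x (k + i)) t htI
          _ = (1 - t) * S + t * T - (n : ℝ) * (t * (1 - t) * D) := by
              rw [Finset.sum_sub_distrib, Finset.sum_add_distrib, ← Finset.mul_sum,
                ← Finset.mul_sum, Finset.sum_const, Finset.card_range, nsmul_eq_mul]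
      have hchain : S ≤ (1 - t) * S + t * T - (n : ℝ) * (t * (1 - t) * D) :=
        h1'.trans h2
      nlinarith [hchain, mul_nonneg ht0.le hS0, ht0, mul_pos ht0 ht0]
    -- From (1-t) * C ≤ T for all t ∈ (0,1], deduce C ≤ T.
    set C := (n : ℝ) * D with hC
    have hC0 : 0 ≤ C := mul_nonneg hnpos.le hD0
    refine le_of_forall_pos_le_add fun δ hδ => ?_
    rcases eq_or_lt_of_le hC0 with h | h
    · have := hstep 1 one_pos le_rfl
      linarith
    · set t := min 1 (δ / C) with htdef
      have ht0 : 0 < t := lt_min one_pos (div_pos hδ h)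
      have hst := hstep t ht0 (min_le_left _ _)
      have htC : t * C ≤ δ := by
        calc t * C ≤ (δ / C) * C := mul_le_mul_of_nonneg_right (min_le_right _ _) hC0
          _ = δ := div_mul_cancel₀ _ h.ne'
      linarith
  -- Now the main argument.
  intro ε hε
  obtain ⟨N₀, hN₀⟩ := Metric.tendsto_atTop.mp hx (ε / 2) (by positivity)
  set M : ℝ := (∑ j ∈ Finset.range N₀, dist (x j) y ^ 2) + 1 with hMdef
  have hM0 : 0 < M := by positivity
  have hMb : ∀ j, j < N₀ → dist (x j) y ^ 2 ≤ M := by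
    intro j hj
    have h1 : dist (x j) y ^ 2 ≤ ∑ j ∈ Finset.range N₀, dist (x j) y ^ 2 :=
      Finset.single_le_sum (f := fun j => dist (x j) y ^ 2)
        (fun i _ => by positivity) (Finset.mem_range.mpr hj)
    linarith
  refine ⟨max 1 ⌈(2 * N₀ * M) / ε ^ 2⌉₊, fun n hn k => ?_⟩
  have hn1 : 1 ≤ n := le_trans (le_max_left _ _) hn
  have hnpos : (0:ℝ) < n := by exact_mod_cast hn1
  have hnR : (2 * N₀ * M) / ε ^ 2 ≤ (n : ℝ) := by
    refine le_trans (Nat.le_ceil _) ?_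
    exact_mod_cast le_trans (le_max_right _ _) hn
  have hNM : (N₀ : ℝ) * M ≤ (n : ℝ) * ε ^ 2 / 2 := by
    rw [div_le_iff₀ (by positivity : (0:ℝ) < ε ^ 2)] at hnR
    nlinarith
  have hkey := key n k hn1
  -- Bound the sum T.
  have hTb : ∑ i ∈ Finset.range n, dist (x (k + i)) y ^ 2
      ≤ (n : ℝ) * (ε ^ 2 / 4) + (N₀ : ℝ) * M := by
    have hterm : ∀ i ∈ Finset.range n,
        dist (x (k + i)) y ^ 2 ≤ ε ^ 2 / 4 + (if i < N₀ then M else 0) := by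
      intro i _
      by_cases hi : k + i < N₀
      · have hi' : i < N₀ := lt_of_le_of_lt (Nat.le_add_left i k) hi
        have := hMb (k + i) hi
        simp only [hi', if_pos]
        nlinarith [sq_nonneg ε]
      · push_neg at hi
        have hd := hN₀ (k + i) hi
        have h2 : dist (x (k + i)) y ^ 2 ≤ ε ^ 2 / 4 := by
          nlinarith [dist_nonneg (x := x (k + i)) (y := y)]
        have : (0:ℝ) ≤ (if i < N₀ then M else 0) := by positivity
        linarith
    calc ∑ i ∈ Finset.range n, dist (x (k + i)) y ^ 2
        ≤ ∑ i ∈ Finset.range n, (ε ^ 2 / 4 + (if i < N₀ then M else 0)) :=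
          Finset.sum_le_sum hterm
      _ = (n : ℝ) * (ε ^ 2 / 4) + ∑ i ∈ Finset.range n, (if i < N₀ then M else 0) := by
          rw [Finset.sum_add_distrib, Finset.sum_const, Finset.card_range, nsmul_eq_mul]
      _ ≤ (n : ℝ) * (ε ^ 2 / 4) + (N₀ : ℝ) * M := by
          have hsub : (Finset.range n).filter (fun i => i < N₀) ⊆ Finset.range N₀ := by
            intro i hi
            simp only [Finset.mem_filter, Finset.mem_range] at hi ⊢
            exact hi.2
          have : ∑ i ∈ Finset.range n, (if i < N₀ then M else 0)
              = (((Finset.range n).filter (fun i => i < N₀)).card : ℝ) * M := by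
            rw [← Finset.sum_filter, Finset.sum_const, nsmul_eq_mul]
          rw [this]
          have hcard : ((Finset.range n).filter (fun i => i < N₀)).card ≤ N₀ := by
            simpa using Finset.card_le_card hsub
          have : (((Finset.range n).filter (fun i => i < N₀)).card : ℝ) ≤ (N₀ : ℝ) := by
            exact_mod_cast hcard
          nlinarith
  have hD : dist (σ n k) y ^ 2 < ε ^ 2 := by
    have h1 : (n : ℝ) * dist (σ n k) y ^ 2 < (n : ℝ) * ε ^ 2 := by
      nlinarith [mul_pos hnpos (pow_pos hε 2)]
    exact lt_of_mul_lt_mul_left h1 hnpos.le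
  exact lt_of_pow_lt_pow_left₀ 2 hε.le hD
end

section
/- Let {x_n} be a sequence in a Hadamard space such that the Vallée-Poussin Karcher means σ_n^k converge to y uniformly in k ≥ 0, and such that {x_n} is asymptotically regular (d(x_n, x_{n+1}) → 0). Then x_n converges to y. -/
open Finset Filter Metric

/-- Tauberian theorem: if the Vallée-Poussin Karcher means `σ n k` converge to `y`
uniformly in `k` and the sequence is asymptotically regular, then `xₙ → y`. -/
theorem almost_convergence_asymp_regular_implies_convergence
    {X : Type*} [MetricSpace X] [CompleteSpace X]
    (G : GeodesicStructure X) (x : ℕ → X) (σ : ℕ → ℕ → X)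
    (hσ : ∀ n k : ℕ, 1 ≤ n → ∀ z : X,
      (1 / n : ℝ) * ∑ i ∈ Finset.range n, dist (x (k + i)) (σ n k) ^ 2
        ≤ (1 / n : ℝ) * ∑ i ∈ Finset.range n, dist (x (k + i)) z ^ 2)
    (y : X)
    (hunif : ∀ ε > (0:ℝ), ∃ N : ℕ, ∀ n ≥ N, ∀ k : ℕ, dist (σ n k) y < ε)
    (hreg : Tendsto (fun n => dist (x n) (x (n + 1))) atTop (nhds 0)) :
    Tendsto x atTop (nhds y) := by
  rw [Metric.tendsto_atTop]
  intro ε hε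
  obtain ⟨N, hN⟩ := hunif (ε/2) (by linarith)
  set n := max N 1 with hn
  have hn1 : 1 ≤ n := le_max_right _ _
  have hnN : N ≤ n := le_max_left _ _
  have hnpos : (0:ℝ) < (n:ℝ) := by exact_mod_cast hn1
  have hδ : (0:ℝ) < ε/(4*n) := by positivity
  obtain ⟨K, hK⟩ := (Metric.tendsto_atTop.1 hreg) (ε/(4*n)) hδ
  refine ⟨K, fun k hk => ?_⟩
  have hstep : ∀ i : ℕ, dist (x k) (x (k+i)) ≤ i * (ε/(4*n)) := by
    intro i
    induction i with
    | zero => simp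
    | succ j ih =>
      have h1 : dist (x (k+j)) (x (k+j+1)) < ε/(4*n) := by
        have := hK (k+j) (le_trans hk (Nat.le_add_right _ _))
        rw [Real.dist_eq, sub_zero, abs_of_nonneg dist_nonneg] at this
        exact this
      have htri : dist (x k) (x (k+(j+1))) ≤ dist (x k) (x (k+j)) + dist (x (k+j)) (x (k+j+1)) := by
        have : k+(j+1) = k+j+1 := rfl
        rw [this]; exact dist_triangle _ _ _
      push_cast
      push_cast at ih
      linarith
  have hsmall : ∀ i ∈ Finset.range n, dist (x (k+i)) (x k) ≤ ε/4 := by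
    intro i hi
    rw [Finset.mem_range] at hi
    rw [dist_comm]
    calc dist (x k) (x (k+i)) ≤ i * (ε/(4*n)) := hstep i
      _ ≤ n * (ε/(4*n)) := by
          apply mul_le_mul_of_nonneg_right _ hδ.le
          exact_mod_cast hi.le
      _ = ε/4 := by field_simp
  -- key sums
  have hAB := hσ n k hn1 (x k)
  have hAB' : ∑ i ∈ Finset.range n, dist (x (k+i)) (σ n k) ^ 2
      ≤ ∑ i ∈ Finset.range n, dist (x (k+i)) (x k) ^ 2 := by
    have := mul_le_mul_of_nonneg_left hAB hnpos.le
    rw [← mul_assoc, ← mul_assoc, mul_one_div_cancel hnpos.ne', one_mul, one_mul] at this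
    exact this
  have hB : ∑ i ∈ Finset.range n, dist (x (k+i)) (x k) ^ 2 ≤ n * (ε/4)^2 := by
    calc ∑ i ∈ Finset.range n, dist (x (k+i)) (x k) ^ 2
        ≤ ∑ i ∈ Finset.range n, (ε/4)^2 := by
          apply Finset.sum_le_sum
          intro i hi
          have := hsmall i hi
          nlinarith [(dist_nonneg : (0:ℝ) ≤ dist (x (k+i)) (x k))]
      _ = n * (ε/4)^2 := by rw [Finset.sum_const, Finset.card_range]; ring
  have hD : (n:ℝ) * dist (x k) (σ n k) ^ 2
      ≤ 2 * (∑ i ∈ Finset.range n, dist (x (k+i)) (x k) ^ 2)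
        + 2 * (∑ i ∈ Finset.range n, dist (x (k+i)) (σ n k) ^ 2) := by
    have hpt : ∀ i ∈ Finset.range n, dist (x k) (σ n k) ^ 2
        ≤ 2 * dist (x (k+i)) (x k) ^ 2 + 2 * dist (x (k+i)) (σ n k) ^ 2 := by
      intro i _
      have h1 : dist (x k) (σ n k) ≤ dist (x k) (x (k+i)) + dist (x (k+i)) (σ n k) :=
        dist_triangle _ _ _
      have h2 : dist (x k) (x (k+i)) = dist (x (k+i)) (x k) := dist_comm _ _
      nlinarith [(dist_nonneg : (0:ℝ) ≤ dist (x k) (σ n k)),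
        sq_nonneg (dist (x (k+i)) (x k) - dist (x (k+i)) (σ n k))]
    calc (n:ℝ) * dist (x k) (σ n k) ^ 2
        = ∑ _i ∈ Finset.range n, dist (x k) (σ n k) ^ 2 := by
          rw [Finset.sum_const, Finset.card_range]; ring
      _ ≤ ∑ i ∈ Finset.range n, (2 * dist (x (k+i)) (x k) ^ 2
            + 2 * dist (x (k+i)) (σ n k) ^ 2) := Finset.sum_le_sum hpt
      _ = _ := by rw [Finset.sum_add_distrib, ← Finset.mul_sum, ← Finset.mul_sum]
  have hD2 : (n:ℝ) * dist (x k) (σ n k) ^ 2 ≤ (n:ℝ) * (4 * (ε/4)^2) := by nlinarith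
  have hD3 : dist (x k) (σ n k) ^ 2 ≤ (ε/2)^2 := by
    have := le_of_mul_le_mul_left (by linarith : (n:ℝ) * dist (x k) (σ n k) ^ 2 ≤ (n:ℝ) * (4*(ε/4)^2)) hnpos
    nlinarith
  have hxσ : dist (x k) (σ n k) ≤ ε/2 := by
    nlinarith [(dist_nonneg : (0:ℝ) ≤ dist (x k) (σ n k))]
  have hσy : dist (σ n k) y < ε/2 := hN n hnN k
  calc dist (x k) y ≤ dist (x k) (σ n k) + dist (σ n k) y := dist_triangle _ _ _
    _ < ε := by linarith
end

section
/- Let {x_n} be a sequence in a Hadamard space whose Cesàro–Karcher means σ_n converge to y, and suppose sup_{k≥0} (1/(n+k)) Σ_{i=0}^{k-1} (d²(x_i, σ_n^k) − d²(x_i, σ_k)) → 0 as n → ∞. Then σ_n^k converges to y uniformly in k ≥ 0 (i.e., {x_n} almost converges to y). -/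
open Finset Filter Metric

/-- Tauberian theorem: if the Cesàro–Karcher means `σ n` converge to `y` and the
Tauberian condition holds, then the Vallée-Poussin Karcher means `σ' n k`
converge to `y` uniformly in `k` (almost convergence). -/
theorem mean_convergence_tauberian_implies_almost_convergence
    {X : Type*} [MetricSpace X] [CompleteSpace X]
    (G : GeodesicStructure X) (x : ℕ → X) (σ : ℕ → X) (σ' : ℕ → ℕ → X)
    (hσ : ∀ n : ℕ, 1 ≤ n → ∀ z : X,
      (1 / n : ℝ) * ∑ i ∈ Finset.range n, dist (x i) (σ n) ^ 2
        ≤ (1 / n : ℝ) * ∑ i ∈ Finset.range n, dist (x i) z ^ 2)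
    (hσ' : ∀ n k : ℕ, 1 ≤ n → ∀ z : X,
      (1 / n : ℝ) * ∑ i ∈ Finset.range n, dist (x (k + i)) (σ' n k) ^ 2
        ≤ (1 / n : ℝ) * ∑ i ∈ Finset.range n, dist (x (k + i)) z ^ 2)
    (y : X) (hmean : Tendsto σ atTop (nhds y))
    (htau : ∀ ε > (0:ℝ), ∃ N : ℕ, ∀ n ≥ N, ∀ k : ℕ,
      (1 / ((n : ℝ) + k)) * ∑ i ∈ Finset.range k,
        (dist (x i) (σ' n k) ^ 2 - dist (x i) (σ k) ^ 2) < ε) :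
    ∀ ε > (0:ℝ), ∃ N : ℕ, ∀ n ≥ N, ∀ k : ℕ, dist (σ' n k) y < ε := by
  intro ε hε
  obtain ⟨N1, hN1⟩ := htau (ε ^ 2 / 8) (by positivity)
  obtain ⟨N2, hN2⟩ := (Metric.tendsto_atTop.mp hmean) (ε / 2) (by positivity)
  refine ⟨max (max N1 N2) 1, fun n hn k => ?_⟩
  have hn1 : 1 ≤ n := le_trans (le_max_right _ _) hn
  have hnN1 : N1 ≤ n := le_trans (le_trans (le_max_left _ _) (le_max_left _ _)) hn
  have hnN2 : N2 ≤ n + k :=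
    le_trans (le_trans (le_trans (le_max_right _ _) (le_max_left _ _)) hn) (Nat.le_add_right _ _)
  set a := σ' n k with ha
  set b := σ (n + k) with hb
  have hp : (0:ℝ) < ((n + k : ℕ) : ℝ) := by
    have : (1:ℕ) ≤ n + k := le_trans hn1 (Nat.le_add_right _ _)
    exact_mod_cast this
  set m := G.g a b (1/2) with hmdef
  have hcn : ∀ z : X, dist z m ^ 2 ≤
      (1/2) * dist z a ^ 2 + (1/2) * dist z b ^ 2 - (1/4) * dist a b ^ 2 := by
    intro z
    have h := G.cn a b z (1/2) ⟨by norm_num, by norm_num⟩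
    norm_num at h
    linarith
  -- minimality of b among the first n+k points applied with z = m
  have hb_min : ∑ i ∈ Finset.range (n + k), dist (x i) b ^ 2
      ≤ ∑ i ∈ Finset.range (n + k), dist (x i) m ^ 2 := by
    have h := hσ (n + k) (le_trans hn1 (Nat.le_add_right _ _)) m
    have hinv : (0:ℝ) < 1 / ((n + k : ℕ) : ℝ) := by positivity
    exact (mul_le_mul_iff_right₀ hinv).mp h
  have hsum_cn : ∑ i ∈ Finset.range (n + k), dist (x i) m ^ 2
      ≤ (1/2) * ∑ i ∈ Finset.range (n + k), dist (x i) a ^ 2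
        + (1/2) * ∑ i ∈ Finset.range (n + k), dist (x i) b ^ 2
        - ((n + k : ℕ) : ℝ) * ((1/4) * dist a b ^ 2) := by
    calc ∑ i ∈ Finset.range (n + k), dist (x i) m ^ 2
        ≤ ∑ i ∈ Finset.range (n + k),
            ((1/2) * dist (x i) a ^ 2 + (1/2) * dist (x i) b ^ 2 - (1/4) * dist a b ^ 2) :=
          Finset.sum_le_sum fun i _ => hcn (x i)
      _ = (1/2) * ∑ i ∈ Finset.range (n + k), dist (x i) a ^ 2
            + (1/2) * ∑ i ∈ Finset.range (n + k), dist (x i) b ^ 2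
            - ((n + k : ℕ) : ℝ) * ((1/4) * dist a b ^ 2) := by
          rw [Finset.sum_sub_distrib, Finset.sum_add_distrib, ← Finset.mul_sum,
            ← Finset.mul_sum, Finset.sum_const, Finset.card_range, nsmul_eq_mul]
  -- hence (n+k)/4 * d(a,b)^2 ≤ (1/2) (S_a - S_b)
  have hkey : ((n + k : ℕ) : ℝ) * ((1/4) * dist a b ^ 2)
      ≤ (1/2) * (∑ i ∈ Finset.range (n + k), dist (x i) a ^ 2
        - ∑ i ∈ Finset.range (n + k), dist (x i) b ^ 2) := by
    linarith [le_trans hb_min hsum_cn]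
  -- split the sums
  have hsplit : ∀ w : X, ∑ i ∈ Finset.range (n + k), dist (x i) w ^ 2
      = ∑ i ∈ Finset.range k, dist (x i) w ^ 2
        + ∑ i ∈ Finset.range n, dist (x (k + i)) w ^ 2 := by
    intro w
    rw [show n + k = k + n from Nat.add_comm n k]
    exact Finset.sum_range_add (fun i => dist (x i) w ^ 2) k n
  have htail : ∑ i ∈ Finset.range n, dist (x (k + i)) a ^ 2
      ≤ ∑ i ∈ Finset.range n, dist (x (k + i)) b ^ 2 := by
    have h := hσ' n k hn1 b
    have hinv : (0:ℝ) < 1 / (n : ℝ) := by positivity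
    exact (mul_le_mul_iff_right₀ hinv).mp h
  have hhead : ∑ i ∈ Finset.range k, dist (x i) (σ k) ^ 2
      ≤ ∑ i ∈ Finset.range k, dist (x i) b ^ 2 := by
    rcases Nat.eq_zero_or_pos k with rfl | hk
    · simp
    · have h := hσ k hk b
      have hinv : (0:ℝ) < 1 / (k : ℝ) := by positivity
      exact (mul_le_mul_iff_right₀ hinv).mp h
  have hdiff : ∑ i ∈ Finset.range (n + k), dist (x i) a ^ 2
      - ∑ i ∈ Finset.range (n + k), dist (x i) b ^ 2
      ≤ ∑ i ∈ Finset.range k, (dist (x i) a ^ 2 - dist (x i) (σ k) ^ 2) := by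
    rw [hsplit a, hsplit b, Finset.sum_sub_distrib]
    linarith
  have hdsq : dist a b ^ 2
      ≤ 2 * ((1 / ((n : ℝ) + k)) * ∑ i ∈ Finset.range k,
          (dist (x i) a ^ 2 - dist (x i) (σ k) ^ 2)) := by
    have hkey2 : ((n + k : ℕ) : ℝ) * ((1/4) * dist a b ^ 2)
        ≤ (1/2) * ∑ i ∈ Finset.range k, (dist (x i) a ^ 2 - dist (x i) (σ k) ^ 2) := by
      linarith
    have hcast : ((n + k : ℕ) : ℝ) = (n : ℝ) + k := by push_cast; ring
    rw [hcast] at hkey2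
    have hp' : (0:ℝ) < (n : ℝ) + k := hcast ▸ hp
    rw [show (2:ℝ) * ((1 / ((n : ℝ) + k)) * ∑ i ∈ Finset.range k,
        (dist (x i) a ^ 2 - dist (x i) (σ k) ^ 2))
      = (2 * ∑ i ∈ Finset.range k, (dist (x i) a ^ 2 - dist (x i) (σ k) ^ 2)) / ((n : ℝ) + k)
      from by ring, le_div_iff₀ hp']
    nlinarith [hkey2, hp']
  have htauineq := hN1 n hnN1 k
  have hdsq2 : dist a b ^ 2 < ε ^ 2 / 4 := by
    calc dist a b ^ 2 ≤ _ := hdsq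
      _ < 2 * (ε ^ 2 / 8) := by linarith
      _ = ε ^ 2 / 4 := by ring
  have hdab : dist a b < ε / 2 := by
    have h2 : dist a b ^ 2 < (ε / 2) ^ 2 := by nlinarith
    exact lt_of_pow_lt_pow_left₀ 2 (by positivity) h2
  have hby : dist b y < ε / 2 := hN2 (n + k) hnN2
  calc dist a y ≤ dist a b + dist b y := dist_triangle a b y
    _ < ε / 2 + ε / 2 := by linarith
    _ = ε := by ring
end

section
/- Let {x_n} be a sequence in a Hadamard space whose Cesàro–Karcher means σ_n converge to y, and suppose n·d(x_n, x_{n−1}) → 0 as n → ∞. Then x_n converges to y. -/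
open Finset Filter Metric

/-- Tauberian theorem: if the Cesàro–Karcher means `σ n` converge to `y` and
`n · d(xₙ, x_{n−1}) → 0`, then `xₙ → y`. -/
theorem mean_convergence_tauberian_implies_convergence
    {X : Type*} [MetricSpace X] [CompleteSpace X]
    (G : GeodesicStructure X) (x : ℕ → X) (σ : ℕ → X)
    (hσ : ∀ n : ℕ, 1 ≤ n → ∀ z : X,
      (1 / n : ℝ) * ∑ i ∈ Finset.range n, dist (x i) (σ n) ^ 2
        ≤ (1 / n : ℝ) * ∑ i ∈ Finset.range n, dist (x i) z ^ 2)
    (y : X) (hmean : Tendsto σ atTop (nhds y))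
    (htau : Tendsto (fun n : ℕ => (n : ℝ) * dist (x n) (x (n - 1))) atTop (nhds 0)) :
    Tendsto x atTop (nhds y) := by
  -- Step 1: variance inequality
  have hvar : ∀ n : ℕ, 1 ≤ n → ∀ z : X,
      dist (σ n) z ^ 2 + (1 / n : ℝ) * ∑ i ∈ Finset.range n, dist (x i) (σ n) ^ 2
        ≤ (1 / n : ℝ) * ∑ i ∈ Finset.range n, dist (x i) z ^ 2 := by
    intro n hn z
    set S : ℝ := (1 / n : ℝ) * ∑ i ∈ Finset.range n, dist (x i) (σ n) ^ 2 with hS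
    set T : ℝ := (1 / n : ℝ) * ∑ i ∈ Finset.range n, dist (x i) z ^ 2 with hT
    set D : ℝ := dist (σ n) z with hD
    have hnpos : (0:ℝ) < n := by exact_mod_cast hn
    have key : ∀ t : ℝ, 0 < t → t ≤ 1 → S + (1 - t) * D ^ 2 ≤ T := by
      intro t ht0 ht1
      have htI : t ∈ Set.Icc (0:ℝ) 1 := ⟨le_of_lt ht0, ht1⟩
      have h1 := hσ n hn (G.g (σ n) z t)
      have h2 : (1 / n : ℝ) * ∑ i ∈ Finset.range n, dist (x i) (G.g (σ n) z t) ^ 2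
          ≤ (1 - t) * S + t * T - t * (1 - t) * D ^ 2 := by
        have hsum : ∑ i ∈ Finset.range n, dist (x i) (G.g (σ n) z t) ^ 2
            ≤ ∑ i ∈ Finset.range n, ((1 - t) * dist (x i) (σ n) ^ 2
              + t * dist (x i) z ^ 2 - t * (1 - t) * D ^ 2) := by
          apply Finset.sum_le_sum
          intro i _
          exact G.cn (σ n) z (x i) t htI
        have := mul_le_mul_of_nonneg_left hsum (by positivity : (0:ℝ) ≤ 1 / n)
        calc (1 / n : ℝ) * ∑ i ∈ Finset.range n, dist (x i) (G.g (σ n) z t) ^ 2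
            ≤ (1 / n : ℝ) * ∑ i ∈ Finset.range n, ((1 - t) * dist (x i) (σ n) ^ 2
              + t * dist (x i) z ^ 2 - t * (1 - t) * D ^ 2) := this
          _ = (1 - t) * S + t * T - t * (1 - t) * D ^ 2 := by
              have hne : (n:ℝ) ≠ 0 := ne_of_gt hnpos
              rw [Finset.sum_sub_distrib, Finset.sum_add_distrib, ← Finset.mul_sum,
                ← Finset.mul_sum, Finset.sum_const, Finset.card_range, nsmul_eq_mul]
              have hc : (1/(n:ℝ)) * ((n:ℝ) * (t * (1 - t) * D ^ 2)) = t * (1-t) * D^2 := by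
                field_simp
              rw [mul_sub, mul_add, hc, hS, hT]
              ring
      have h3 : S ≤ (1 - t) * S + t * T - t * (1 - t) * D ^ 2 := le_trans h1 h2
      have h4 : t * (S + (1 - t) * D ^ 2) ≤ t * T := by nlinarith
      have := le_of_mul_le_mul_left h4 ht0
      linarith
    refine le_of_forall_pos_le_add ?_
    intro ε hε
    rcases eq_or_lt_of_le (sq_nonneg D) with hD0 | hDpos
    · have := key 1 one_pos le_rfl
      nlinarith
    · set t : ℝ := min 1 (ε / D ^ 2) with htdef
      have ht0 : 0 < t := lt_min one_pos (div_pos hε hDpos)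
      have ht1 : t ≤ 1 := min_le_left _ _
      have htD : t * D ^ 2 ≤ ε := by
        have : t ≤ ε / D ^ 2 := min_le_right _ _
        calc t * D ^ 2 ≤ (ε / D ^ 2) * D ^ 2 := by nlinarith
          _ = ε := by
            have hD' : D ≠ 0 := by
              rintro h; rw [h] at hDpos; norm_num at hDpos
            field_simp
      have := key t ht0 ht1
      nlinarith
  -- Step 2: Jensen / contraction
  have hjen : ∀ n : ℕ, 1 ≤ n → ∀ z : X,
      dist (σ n) z ≤ (1 / n : ℝ) * ∑ i ∈ Finset.range n, dist (x i) z := by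
    intro n hn z
    have hnpos : (0:ℝ) < n := by exact_mod_cast hn
    set d : ℝ := dist (σ n) z with hd
    set m : ℝ := (1 / n : ℝ) * ∑ i ∈ Finset.range n, dist (x i) z with hm
    have hmain : d ^ 2 ≤ 2 * d * m - d ^ 2 := by
      have h1 := hvar n hn z
      have h2 : ∀ i ∈ Finset.range n, (d - dist (x i) z) ^ 2 ≤ dist (x i) (σ n) ^ 2 := by
        intro i _
        have habs : |dist (σ n) z - dist (x i) z| ≤ dist (σ n) (x i) := abs_dist_sub_le _ _ _
        calc (d - dist (x i) z) ^ 2 = |dist (σ n) z - dist (x i) z| ^ 2 := by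
              rw [sq_abs]
          _ ≤ dist (σ n) (x i) ^ 2 := pow_le_pow_left₀ (abs_nonneg _) habs 2
          _ = dist (x i) (σ n) ^ 2 := by rw [dist_comm]
      have h3 : ∑ i ∈ Finset.range n, (d - dist (x i) z) ^ 2
          ≤ ∑ i ∈ Finset.range n, dist (x i) (σ n) ^ 2 := Finset.sum_le_sum h2
      have h4 : (1 / n : ℝ) * ∑ i ∈ Finset.range n, (d - dist (x i) z) ^ 2
          ≤ (1 / n : ℝ) * ∑ i ∈ Finset.range n, dist (x i) (σ n) ^ 2 :=
        mul_le_mul_of_nonneg_left h3 (by positivity)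
      have h5 : (1 / n : ℝ) * ∑ i ∈ Finset.range n, (d - dist (x i) z) ^ 2
          = d ^ 2 - 2 * d * m + (1 / n : ℝ) * ∑ i ∈ Finset.range n, dist (x i) z ^ 2 := by
        have : ∀ i, (d - dist (x i) z) ^ 2
            = d ^ 2 - 2 * d * dist (x i) z + dist (x i) z ^ 2 := fun i => by ring
        simp_rw [this]
        rw [Finset.sum_add_distrib, Finset.sum_sub_distrib, Finset.sum_const,
          Finset.card_range, nsmul_eq_mul, ← Finset.mul_sum, hm]
        field_simp
      nlinarith [h1, h4]
    rcases le_or_gt d 0 with hd0 | hdpos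
    · have hd0' : d = 0 := le_antisymm hd0 dist_nonneg
      rw [hd0']
      have : (0:ℝ) ≤ ∑ i ∈ Finset.range n, dist (x i) z :=
        Finset.sum_nonneg fun i _ => dist_nonneg
      positivity
    · nlinarith
  -- Step 3: bound dist (σ (n+1)) (x n)
  have hkey : ∀ n : ℕ, dist (σ (n + 1)) (x n)
      ≤ (1 / (n + 1) : ℝ) * ∑ j ∈ Finset.range (n + 1), (j : ℝ) * dist (x j) (x (j - 1)) := by
    intro n
    have h1 := hjen (n + 1) (Nat.le_add_left 1 n) (x n)
    have push : (((n : ℕ) + 1 : ℕ) : ℝ) = (n : ℝ) + 1 := by push_cast; ring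
    have tele : ∀ N k, k ≤ N → dist (x k) (x N)
        ≤ ∑ j ∈ Finset.Ico k N, dist (x (j + 1)) (x j) := by
      intro N
      induction N with
      | zero => intro k hk; interval_cases k; simp
      | succ m ih =>
        intro k hk
        rcases Nat.lt_or_ge k (m + 1) with hk' | hk'
        · have hk'' : k ≤ m := Nat.lt_succ_iff.mp hk'
          calc dist (x k) (x (m + 1)) ≤ dist (x k) (x m) + dist (x m) (x (m+1)) :=
                dist_triangle _ _ _
            _ ≤ (∑ j ∈ Finset.Ico k m, dist (x (j + 1)) (x j)) + dist (x m) (x (m+1)) := by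
                linarith [ih k hk'']
            _ = ∑ j ∈ Finset.Ico k (m + 1), dist (x (j + 1)) (x j) := by
                rw [Finset.sum_Ico_succ_top hk'', dist_comm (x m)]
        · have : k = m + 1 := le_antisymm hk hk'
          subst this
          simp
    have h2 : ∑ k ∈ Finset.range (n + 1), dist (x k) (x n)
        ≤ ∑ j ∈ Finset.range (n + 1), (j : ℝ) * dist (x j) (x (j - 1)) := by
      calc ∑ k ∈ Finset.range (n + 1), dist (x k) (x n)
          ≤ ∑ k ∈ Finset.range (n + 1), ∑ j ∈ Finset.Ico k n, dist (x (j + 1)) (x j) := by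
            apply Finset.sum_le_sum
            intro k hk
            exact tele n k (Nat.lt_succ_iff.mp (Finset.mem_range.mp hk))
        _ = ∑ k ∈ Finset.Ico 0 n, ∑ j ∈ Finset.Ico k n, dist (x (j + 1)) (x j) := by
            rw [Finset.range_eq_Ico, Finset.sum_Ico_succ_top (Nat.zero_le n)]
            simp
        _ = ∑ j ∈ Finset.Ico 0 n, ∑ k ∈ Finset.Ico 0 (j + 1), dist (x (j + 1)) (x j) :=
            Finset.sum_Ico_Ico_comm 0 n _
        _ = ∑ j ∈ Finset.range n, ((j : ℝ) + 1) * dist (x (j + 1)) (x j) := by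
            rw [← Finset.range_eq_Ico]
            apply Finset.sum_congr rfl
            intro j _
            rw [Finset.sum_const, Nat.card_Ico, Nat.sub_zero, nsmul_eq_mul]
            push_cast; ring
        _ = ∑ j ∈ Finset.range (n + 1), (j : ℝ) * dist (x j) (x (j - 1)) := by
            rw [Finset.sum_range_succ' (fun j => (j : ℝ) * dist (x j) (x (j - 1)))]
            simp [dist_comm]
    calc dist (σ (n + 1)) (x n)
        ≤ (1 / (n + 1) : ℝ) * ∑ k ∈ Finset.range (n + 1), dist (x k) (x n) := by
          rw [← push]; exact h1
      _ ≤ (1 / (n + 1) : ℝ) * ∑ j ∈ Finset.range (n + 1), (j : ℝ) * dist (x j) (x (j - 1)) :=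
          mul_le_mul_of_nonneg_left h2 (by positivity)
  -- Step 4: Cesàro
  have hces : Tendsto (fun n : ℕ =>
      (1 / (n + 1) : ℝ) * ∑ j ∈ Finset.range (n + 1), (j : ℝ) * dist (x j) (x (j - 1)))
      atTop (nhds 0) := by
    have h := htau.cesaro
    have h2 := h.comp (tendsto_add_atTop_nat 1)
    have heq : (fun n : ℕ =>
        (1 / (n + 1) : ℝ) * ∑ j ∈ Finset.range (n + 1), (j : ℝ) * dist (x j) (x (j - 1)))
        = (fun m : ℕ => ((m : ℝ)⁻¹ * ∑ i ∈ Finset.range m,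
            (i : ℝ) * dist (x i) (x (i - 1)))) ∘ (fun n => n + 1) := by
      funext n
      simp [Function.comp, one_div]
    rw [heq]
    exact h2
  -- Step 5: conclude
  have hσx : Tendsto (fun n : ℕ => dist (σ (n + 1)) (x n)) atTop (nhds 0) :=
    squeeze_zero (fun n => dist_nonneg) hkey hces
  have hσy : Tendsto (fun n : ℕ => dist (σ (n + 1)) y) atTop (nhds 0) := by
    have := (tendsto_iff_dist_tendsto_zero.mp hmean).comp (tendsto_add_atTop_nat 1)
    exact this
  rw [tendsto_iff_dist_tendsto_zero]
  have hle : ∀ n : ℕ, dist (x n) y ≤ dist (σ (n + 1)) (x n) + dist (σ (n + 1)) y := by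
    intro n
    calc dist (x n) y ≤ dist (x n) (σ (n + 1)) + dist (σ (n + 1)) y := dist_triangle _ _ _
      _ = dist (σ (n + 1)) (x n) + dist (σ (n + 1)) y := by rw [dist_comm]
  have : Tendsto (fun n : ℕ => dist (σ (n + 1)) (x n) + dist (σ (n + 1)) y) atTop (nhds 0) := by
    simpa using hσx.add hσy
  exact squeeze_zero (fun n => dist_nonneg) hle this
end

section
/- In a Hadamard space, the Karcher mean σ_n^k of points x_k, …, x_{k+n-1} lies in the closed convex hull of the set {x_m : m ∈ ℕ}. -/
open Finset Filter Metric

/-- A set is convex w.r.t. a geodesic structure if it contains the geodesic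
segment between any two of its points. -/
def GeodesicConvex {X : Type*} [MetricSpace X] (G : GeodesicStructure X) (C : Set X) : Prop :=
  ∀ x ∈ C, ∀ y ∈ C, ∀ t ∈ Set.Icc (0:ℝ) 1, G.g x y t ∈ C

/-- The Karcher mean of `x_k, …, x_{k+n-1}` lies in the closed convex hull of
`{xₘ : m ∈ ℕ}`. -/
theorem karcher_mean_mem_closedConvexHull {X : Type*} [MetricSpace X] [CompleteSpace X]
    (G : GeodesicStructure X) (x : ℕ → X) (n k : ℕ) (hn : 1 ≤ n) (σ : X)
    (hσ : ∀ z : X,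
      (1 / n : ℝ) * ∑ i ∈ Finset.range n, dist (x (k + i)) σ ^ 2
        ≤ (1 / n : ℝ) * ∑ i ∈ Finset.range n, dist (x (k + i)) z ^ 2) :
    σ ∈ ⋂₀ {C : Set X | IsClosed C ∧ GeodesicConvex G C ∧ Set.range x ⊆ C} := by
  intro C hC
  obtain ⟨hCcl, hconv, hrange⟩ := hC
  have hne : C.Nonempty := ⟨x 0, hrange ⟨0, rfl⟩⟩
  set d : ℝ := Metric.infDist σ C with hd
  have hd0 : 0 ≤ d := Metric.infDist_nonneg
  -- approximate minimizing sequence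
  have hex : ∀ j : ℕ, ∃ y ∈ C, dist σ y ^ 2 < d ^ 2 + 1 / (j + 1) := by
    intro j
    set ε : ℝ := min 1 (1 / (((j : ℝ) + 1) * (2 * d + 1))) with hε
    have hεpos : 0 < ε := lt_min one_pos (by positivity)
    have h1 : Metric.infDist σ C < d + ε := lt_add_of_pos_right d hεpos
    obtain ⟨y, hyC, hy⟩ := (Metric.infDist_lt_iff hne).mp h1
    refine ⟨y, hyC, ?_⟩
    have hsq : dist σ y ^ 2 < (d + ε) ^ 2 := by
      have := pow_lt_pow_left₀ hy dist_nonneg (n := 2) (by norm_num)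
      exact this
    have hε1 : ε ≤ 1 := min_le_left _ _
    have hε2 : ε ≤ 1 / (((j : ℝ) + 1) * (2 * d + 1)) := min_le_right _ _
    have hj : (0:ℝ) < (j : ℝ) + 1 := by positivity
    have h2d : (0:ℝ) < 2 * d + 1 := by linarith
    have hkey : ε * (2 * d + 1) ≤ 1 / ((j : ℝ) + 1) := by
      have := mul_le_mul_of_nonneg_right hε2 h2d.le
      calc ε * (2 * d + 1) ≤ (1 / (((j : ℝ) + 1) * (2 * d + 1))) * (2 * d + 1) := this
        _ = 1 / ((j : ℝ) + 1) := by field_simp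
    nlinarith [hεpos, hε1]
  choose z hzC hz using hex
  -- the sequence is Cauchy
  have key : ∀ i j : ℕ, dist (z i) (z j) ^ 2 ≤ 2 * (1 / ((i : ℝ) + 1) + 1 / ((j : ℝ) + 1)) := by
    intro i j
    have hm : G.g (z i) (z j) (1/2) ∈ C :=
      hconv _ (hzC i) _ (hzC j) _ ⟨by norm_num, by norm_num⟩
    have h1 : d ≤ dist σ (G.g (z i) (z j) (1/2)) := Metric.infDist_le_dist_of_mem hm
    have h2 := G.cn (z i) (z j) σ (1/2) ⟨by norm_num, by norm_num⟩
    have h3 : d ^ 2 ≤ dist σ (G.g (z i) (z j) (1/2)) ^ 2 := pow_le_pow_left₀ hd0 h1 2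
    nlinarith [hz i, hz j]
  have hcauchy : CauchySeq z := by
    rw [Metric.cauchySeq_iff]
    intro ε hε
    obtain ⟨N, hN⟩ := exists_nat_gt (4 / ε ^ 2)
    have hN0 : (0:ℝ) < N := lt_of_le_of_lt (by positivity) hN
    refine ⟨N, fun i hi j hj => ?_⟩
    have hi' : (N:ℝ) ≤ (i:ℝ) := by exact_mod_cast hi
    have hj' : (N:ℝ) ≤ (j:ℝ) := by exact_mod_cast hj
    have hb1 : 1 / ((i:ℝ) + 1) ≤ 1 / (N:ℝ) := by
      apply one_div_le_one_div_of_le hN0; linarith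
    have hb2 : 1 / ((j:ℝ) + 1) ≤ 1 / (N:ℝ) := by
      apply one_div_le_one_div_of_le hN0; linarith
    have h4 : dist (z i) (z j) ^ 2 ≤ 4 / (N:ℝ) := by
      have := key i j
      have h5 : dist (z i) (z j) ^ 2 ≤ 2 * (1 / (N:ℝ) + 1 / (N:ℝ)) := by linarith
      have h6 : 2 * (1 / (N:ℝ) + 1 / (N:ℝ)) = 4 / (N:ℝ) := by ring
      linarith
    have hlt : 4 / (N:ℝ) < ε ^ 2 := by
      rw [div_lt_iff₀ hN0]
      have := (div_lt_iff₀ (by positivity : (0:ℝ) < ε ^ 2)).mp hN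
      nlinarith
    have : dist (z i) (z j) ^ 2 < ε ^ 2 := lt_of_le_of_lt h4 hlt
    exact lt_of_pow_lt_pow_left₀ 2 hε.le this
  obtain ⟨p, hp⟩ := cauchySeq_tendsto_of_complete hcauchy
  have hpC : p ∈ C := hCcl.mem_of_tendsto hp (Filter.Eventually.of_forall hzC)
  -- dist σ p = d
  have hdp : dist σ p = d := by
    have hge : d ≤ dist σ p := Metric.infDist_le_dist_of_mem hpC
    have hle : dist σ p ^ 2 ≤ d ^ 2 := by
      have hf : Filter.Tendsto (fun j => dist σ (z j) ^ 2) Filter.atTop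
          (nhds (dist σ p ^ 2)) := by
        exact ((continuous_const.dist continuous_id).pow 2).continuousAt.tendsto.comp hp
      have hg : Filter.Tendsto (fun j : ℕ => d ^ 2 + 1 / ((j:ℝ) + 1)) Filter.atTop
          (nhds (d ^ 2 + 0)) :=
        tendsto_const_nhds.add tendsto_one_div_add_atTop_nhds_zero_nat
      rw [add_zero] at hg
      exact le_of_tendsto_of_tendsto' hf hg (fun j => (hz j).le)
    nlinarith
  -- variational inequality for the projection
  have proj : ∀ y ∈ C, dist p y ^ 2 ≤ dist σ y ^ 2 - d ^ 2 := by
    intro y hy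
    have hstep : ∀ t : ℝ, 0 < t → t ≤ 1 →
        (1 - t) * dist p y ^ 2 ≤ dist σ y ^ 2 - d ^ 2 := by
      intro t ht0 ht1
      have hm : G.g p y t ∈ C := hconv p hpC y hy t ⟨ht0.le, ht1⟩
      have h1 : d ≤ dist σ (G.g p y t) := Metric.infDist_le_dist_of_mem hm
      have h2 := G.cn p y σ t ⟨ht0.le, ht1⟩
      have h3 : d ^ 2 ≤ dist σ (G.g p y t) ^ 2 := pow_le_pow_left₀ hd0 h1 2
      rw [hdp] at h2
      have h4 : t * ((1 - t) * dist p y ^ 2) ≤ t * (dist σ y ^ 2 - d ^ 2) := by nlinarith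
      exact (mul_le_mul_iff_right₀ ht0).mp h4
    refine le_of_forall_pos_le_add ?_
    intro ε hε
    set t : ℝ := min 1 (ε / (dist p y ^ 2 + 1)) with ht
    have ht0 : 0 < t := lt_min one_pos (by positivity)
    have ht1 : t ≤ 1 := min_le_left _ _
    have h := hstep t ht0 ht1
    have htε : t * (dist p y ^ 2 + 1) ≤ ε := by
      calc t * (dist p y ^ 2 + 1)
          ≤ (ε / (dist p y ^ 2 + 1)) * (dist p y ^ 2 + 1) :=
            mul_le_mul_of_nonneg_right (min_le_right _ _) (by positivity)
        _ = ε := by field_simp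
    nlinarith [sq_nonneg (dist p y), ht0.le]
  -- conclude
  have hsum : ∑ i ∈ Finset.range n, dist (x (k + i)) p ^ 2
      ≤ (∑ i ∈ Finset.range n, dist (x (k + i)) σ ^ 2) - n * d ^ 2 := by
    have h1 : ∀ i ∈ Finset.range n,
        dist (x (k + i)) p ^ 2 ≤ dist (x (k + i)) σ ^ 2 - d ^ 2 := by
      intro i _
      have := proj (x (k + i)) (hrange ⟨k + i, rfl⟩)
      rwa [dist_comm p, dist_comm σ] at this
    calc ∑ i ∈ Finset.range n, dist (x (k + i)) p ^ 2
        ≤ ∑ i ∈ Finset.range n, (dist (x (k + i)) σ ^ 2 - d ^ 2) :=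
          Finset.sum_le_sum h1
      _ = (∑ i ∈ Finset.range n, dist (x (k + i)) σ ^ 2) - n * d ^ 2 := by
          rw [Finset.sum_sub_distrib]
          simp [Finset.card_range, mul_comm]
  have hnpos : (0:ℝ) < 1 / n := by
    have : (1:ℝ) ≤ n := by exact_mod_cast hn
    positivity
  have hmin : ∑ i ∈ Finset.range n, dist (x (k + i)) σ ^ 2
      ≤ ∑ i ∈ Finset.range n, dist (x (k + i)) p ^ 2 :=
    (mul_le_mul_iff_right₀ hnpos).mp (hσ p)
  have hn1 : (1:ℝ) ≤ n := by exact_mod_cast hn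
  have hd2 : d ^ 2 ≤ 0 := by nlinarith
  have hdz : d = 0 := by nlinarith [sq_nonneg d]
  have : σ ∈ closure C := (Metric.mem_closure_iff_infDist_zero hne).mpr hdz
  rwa [hCcl.closure_eq] at this
end

section
/- Let {x_n} be a bounded sequence in a Hadamard space. Then for each fixed k ≥ 0, d(σ_n, σ_n^k) → 0 as n → ∞, where σ_n is the Karcher mean of x_0, …, x_{n-1} and σ_n^k is the Karcher mean of x_k, …, x_{k+n-1}. -/
open Finset Filter Metric

/-- For a bounded sequence, the Cesàro–Karcher means `σ n` and the shifted
Vallée-Poussin Karcher means `σ' n k` become asymptotically close for each fixed `k`. -/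
theorem dist_karcher_means_tendsto_zero {X : Type*} [MetricSpace X] [CompleteSpace X]
    (G : GeodesicStructure X) (x : ℕ → X)
    (hbdd : Bornology.IsBounded (Set.range x))
    (σ : ℕ → X) (σ' : ℕ → ℕ → X)
    (hσ : ∀ n : ℕ, 1 ≤ n → ∀ z : X,
      (1 / n : ℝ) * ∑ i ∈ Finset.range n, dist (x i) (σ n) ^ 2
        ≤ (1 / n : ℝ) * ∑ i ∈ Finset.range n, dist (x i) z ^ 2)
    (hσ' : ∀ n k : ℕ, 1 ≤ n → ∀ z : X,
      (1 / n : ℝ) * ∑ i ∈ Finset.range n, dist (x (k + i)) (σ' n k) ^ 2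
        ≤ (1 / n : ℝ) * ∑ i ∈ Finset.range n, dist (x (k + i)) z ^ 2)
    (k : ℕ) :
    Tendsto (fun n => dist (σ n) (σ' n k)) atTop (nhds 0) := by
  obtain ⟨R, hR⟩ := Metric.isBounded_iff.1 hbdd
  have hRx : ∀ i j : ℕ, dist (x i) (x j) ≤ R := fun i j => hR ⟨i, rfl⟩ ⟨j, rfl⟩
  have hR0 : (0:ℝ) ≤ R := dist_nonneg.trans (hRx 0 0)
  -- generic bound for a minimizer of averaged squared distances
  have gen : ∀ (y : ℕ → X) (p : X) (n : ℕ), 1 ≤ n →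
      (∀ i j, dist (y i) (y j) ≤ R) →
      ((1/n:ℝ) * ∑ i ∈ Finset.range n, dist (y i) p ^ 2
        ≤ (1/n:ℝ) * ∑ i ∈ Finset.range n, dist (y i) (y 0) ^ 2) →
      ∀ j, dist (y j) p ≤ 2 * R := by
    intro y p n hn hy hmin j
    have hn' : (0:ℝ) < n := by exact_mod_cast hn
    have hpos : (0:ℝ) < 1/n := by positivity
    have hmin' : ∑ i ∈ Finset.range n, dist (y i) p ^ 2
        ≤ ∑ i ∈ Finset.range n, dist (y i) (y 0) ^ 2 :=
      le_of_mul_le_mul_left hmin hpos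
    have hsum : ∑ i ∈ Finset.range n, dist (y i) p ^ 2 ≤ (n:ℝ) * R ^ 2 := by
      refine hmin'.trans ?_
      calc ∑ i ∈ Finset.range n, dist (y i) (y 0) ^ 2
          ≤ ∑ i ∈ Finset.range n, R ^ 2 :=
            Finset.sum_le_sum fun i _ => pow_le_pow_left₀ dist_nonneg (hy i 0) 2
        _ = (n:ℝ) * R ^ 2 := by rw [Finset.sum_const, Finset.card_range]; ring
    have hex : ∃ i ∈ Finset.range n, dist (y i) p ≤ R := by
      by_contra h
      push_neg at h
      have hlt : ∑ i ∈ Finset.range n, R ^ 2 < ∑ i ∈ Finset.range n, dist (y i) p ^ 2 := by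
        refine Finset.sum_lt_sum_of_nonempty ?_ fun i hi => ?_
        · exact Finset.nonempty_range_iff.2 (by omega)
        · exact pow_lt_pow_left₀ (h i hi) hR0 two_ne_zero
      rw [Finset.sum_const, Finset.card_range] at hlt
      have : (n:ℝ) * R ^ 2 < (n:ℝ) * R ^ 2 := by
        calc (n:ℝ) * R ^ 2 = (n • (R^2) : ℝ) := by simp [nsmul_eq_mul]
          _ < ∑ i ∈ Finset.range n, dist (y i) p ^ 2 := hlt
          _ ≤ (n:ℝ) * R ^ 2 := hsum
      exact lt_irrefl _ this
    obtain ⟨i, _, hi⟩ := hex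
    calc dist (y j) p ≤ dist (y j) (y i) + dist (y i) p := dist_triangle _ _ _
      _ ≤ R + R := add_le_add (hy j i) hi
      _ = 2 * R := by ring
  -- the two mean bounds
  have hσbd : ∀ n : ℕ, 1 ≤ n → ∀ j, dist (x j) (σ n) ≤ 2 * R := by
    intro n hn
    exact gen x (σ n) n hn hRx (hσ n hn (x 0))
  have hσ'bd : ∀ n : ℕ, 1 ≤ n → ∀ j, dist (x (k + j)) (σ' n k) ≤ 2 * R := by
    intro n hn
    exact gen (fun i => x (k + i)) (σ' n k) n hn (fun i j => hRx _ _) (hσ' n k hn (x (k + 0)))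
  -- key quantitative bound
  have key : ∀ n : ℕ, 1 ≤ n → dist (σ n) (σ' n k) ^ 2 ≤ (36 * k * R ^ 2) / n := by
    intro n hn
    have hn' : (0:ℝ) < n := by exact_mod_cast hn
    set a := ∑ i ∈ Finset.range n, dist (x (k + i)) (σ' n k) ^ 2 with ha
    set b := ∑ i ∈ Finset.range n, dist (x (k + i)) (σ n) ^ 2 with hb
    set S := fun z => ∑ i ∈ Finset.range n, dist (x i) z ^ 2 with hS
    -- strong convexity: n * D ≤ 2 * (b - a)
    have hD : (n:ℝ) * dist (σ n) (σ' n k) ^ 2 ≤ 2 * (b - a) := by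
      set m := G.g (σ' n k) (σ n) (1/2) with hm
      have h1 : a ≤ ∑ i ∈ Finset.range n, dist (x (k + i)) m ^ 2 :=
        le_of_mul_le_mul_left (hσ' n k hn m) (by positivity)
      have h2 : ∑ i ∈ Finset.range n, dist (x (k + i)) m ^ 2
          ≤ (1/2) * a + (1/2) * b - (n:ℝ) * (1/4) * dist (σ n) (σ' n k) ^ 2 := by
        have hcn : ∀ i ∈ Finset.range n, dist (x (k + i)) m ^ 2
            ≤ (1/2) * dist (x (k + i)) (σ' n k) ^ 2 + (1/2) * dist (x (k + i)) (σ n) ^ 2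
              - (1/4) * dist (σ n) (σ' n k) ^ 2 := by
          intro i _
          have := G.cn (σ' n k) (σ n) (x (k + i)) (1/2) (by constructor <;> norm_num)
          rw [dist_comm (σ' n k) (σ n)] at this
          linarith
        calc ∑ i ∈ Finset.range n, dist (x (k + i)) m ^ 2
            ≤ ∑ i ∈ Finset.range n, ((1/2) * dist (x (k + i)) (σ' n k) ^ 2
                + (1/2) * dist (x (k + i)) (σ n) ^ 2 - (1/4) * dist (σ n) (σ' n k) ^ 2) :=
              Finset.sum_le_sum hcn
          _ = (1/2) * a + (1/2) * b - (n:ℝ) * (1/4) * dist (σ n) (σ' n k) ^ 2 := by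
              rw [Finset.sum_sub_distrib, Finset.sum_add_distrib, Finset.sum_const,
                Finset.card_range]
              simp only [ha, hb, Finset.mul_sum, nsmul_eq_mul]
              ring
      linarith
    -- boundary-term estimates: |T(z) - S(z)| ≤ k * (2R)^2 for z = σ n, σ' n k
    have hshift : ∀ z : X, (∀ j, dist (x j) z ≤ 3 * R) →
        ∑ i ∈ Finset.range n, dist (x (k + i)) z ^ 2 ≤ S z + k * (3*R)^2 ∧
        S z ≤ ∑ i ∈ Finset.range n, dist (x (k + i)) z ^ 2 + k * (3*R)^2 := by
      intro z hz
      have hT : ∑ i ∈ Finset.range n, dist (x (k + i)) z ^ 2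
          = ∑ i ∈ Finset.Ico k (k + n), dist (x i) z ^ 2 := by
        rw [Finset.sum_Ico_eq_sum_range]
        simp
      have hblock : ∀ m0 : ℕ, ∑ i ∈ Finset.Ico m0 (m0 + k), dist (x i) z ^ 2 ≤ k * (3*R)^2 := by
        intro m0
        calc ∑ i ∈ Finset.Ico m0 (m0 + k), dist (x i) z ^ 2
            ≤ ∑ i ∈ Finset.Ico m0 (m0 + k), (3*R)^2 :=
              Finset.sum_le_sum fun i _ => pow_le_pow_left₀ dist_nonneg (hz i) 2
          _ = k * (3*R)^2 := by rw [Finset.sum_const, Nat.card_Ico]; simp [nsmul_eq_mul]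
      have hblocknn : ∀ (s : Finset ℕ), (0:ℝ) ≤ ∑ i ∈ s, dist (x i) z ^ 2 :=
        fun s => Finset.sum_nonneg fun i _ => by positivity
      have hsplit1 : ∑ i ∈ Finset.Ico 0 k, dist (x i) z ^ 2
          + ∑ i ∈ Finset.Ico k (k + n), dist (x i) z ^ 2
          = ∑ i ∈ Finset.Ico 0 (k + n), dist (x i) z ^ 2 :=
        Finset.sum_Ico_consecutive _ (Nat.zero_le k) (Nat.le_add_right k n)
      have hsplit2 : ∑ i ∈ Finset.Ico 0 n, dist (x i) z ^ 2
          + ∑ i ∈ Finset.Ico n (n + k), dist (x i) z ^ 2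
          = ∑ i ∈ Finset.Ico 0 (n + k), dist (x i) z ^ 2 :=
        Finset.sum_Ico_consecutive _ (Nat.zero_le n) (Nat.le_add_right n k)
      have hSe : S z = ∑ i ∈ Finset.Ico 0 n, dist (x i) z ^ 2 := by
        simp only [hS]
        rw [Finset.range_eq_Ico]
      have hkn : k + n = n + k := Nat.add_comm k n
      rw [hkn] at hsplit1
      constructor
      · rw [hT, hSe]
        have b1 := hblock n
        have b2 := hblocknn (Finset.Ico 0 k)
        rw [hkn]
        linarith [hsplit1, hsplit2]
      · rw [hT, hSe, hkn]
        have b1 := hblock 0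
        rw [Nat.zero_add] at b1
        have b2 := hblocknn (Finset.Ico n (n + k))
        linarith [hsplit1, hsplit2]
    obtain ⟨hb1, _⟩ := hshift (σ n) (fun j => (hσbd n hn j).trans (by linarith))
    obtain ⟨_, ha2⟩ := hshift (σ' n k) (fun j => by
      calc dist (x j) (σ' n k) ≤ dist (x j) (x (k + 0)) + dist (x (k + 0)) (σ' n k) :=
            dist_triangle _ _ _
        _ ≤ R + 2 * R := add_le_add (hRx _ _) (hσ'bd n hn 0)
        _ = 3 * R := by ring)
    have hSmin : S (σ n) ≤ S (σ' n k) :=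
      le_of_mul_le_mul_left (hσ n hn (σ' n k)) (by positivity)
    -- combine: b - a ≤ 2 * k * (2R)^2
    have hba : b - a ≤ 2 * (k * (3*R)^2) := by
      have : b ≤ S (σ n) + k * (3*R)^2 := hb1
      have : S (σ' n k) ≤ a + k * (3*R)^2 := ha2
      linarith
    have hfin : (n:ℝ) * dist (σ n) (σ' n k) ^ 2 ≤ 36 * k * R ^ 2 := by
      calc (n:ℝ) * dist (σ n) (σ' n k) ^ 2 ≤ 2 * (b - a) := hD
        _ ≤ 2 * (2 * (k * (3*R)^2)) := by linarith
        _ = 36 * k * R ^ 2 := by ring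
    rw [le_div_iff₀ hn']
    linarith [hfin]
  -- squeeze
  have hlim : Tendsto (fun n : ℕ => (36 * k * R ^ 2) / n) atTop (nhds 0) :=
    tendsto_const_div_atTop_nhds_zero_nat _
  have hsq : Tendsto (fun n => dist (σ n) (σ' n k) ^ 2) atTop (nhds 0) := by
    refine squeeze_zero' ?_ ?_ hlim
    · exact Eventually.of_forall fun n => by positivity
    · filter_upwards [eventually_ge_atTop 1] with n hn
      exact key n hn
  have h2 := (Real.continuous_sqrt.tendsto 0).comp hsq
  simp only [Function.comp_def] at h2
  rw [Real.sqrt_zero] at h2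
  exact h2.congr fun n => Real.sqrt_sq dist_nonneg
end

section
/- Let {x_n} be a sequence in a Hadamard space such that the Vallée-Poussin Karcher means σ_n^k Δ-converge to y uniformly in k ≥ 0 (in the sense that d(y, P_I σ_n^k) → 0 uniformly in k for every geodesic I issuing from y), and suppose d(x_n, x_{n+1}) → 0. Then x_n Δ-converges to y. -/
open Finset Filter Metric

/-- `p` is the metric projection onto the set `I`. -/
def IsMetricProjOn {X : Type*} [MetricSpace X] (p : X → X) (I : Set X) : Prop :=
  ∀ z : X, p z ∈ I ∧ ∀ w ∈ I, dist z (p z) ≤ dist z w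

section Aux

variable {X : Type*} [MetricSpace X]

private lemma sq_le_imp_le {a b : ℝ} (ha : 0 ≤ a) (hb : 0 ≤ b) (h : a ^ 2 ≤ b ^ 2) : a ≤ b := by
  nlinarith

/-- Uniqueness of points with a given distance profile along a geodesic. -/
lemma GeodesicStructure.unique (G : GeodesicStructure X) {u v m : X} {t : ℝ}
    (ht : t ∈ Set.Icc (0:ℝ) 1)
    (h1 : dist u m = t * dist u v) (h2 : dist v m = (1 - t) * dist u v) :
    m = G.g u v t := by
  have hcn := G.cn u v m t ht
  rw [dist_comm u m] at h1
  rw [dist_comm v m] at h2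
  rw [h1, h2] at hcn
  have hz : (1 - t) * (t * dist u v) ^ 2 + t * ((1 - t) * dist u v) ^ 2
      - t * (1 - t) * dist u v ^ 2 = 0 := by ring
  have h0 : dist m (G.g u v t) ^ 2 ≤ 0 := by linarith
  have : dist m (G.g u v t) = 0 := by
    nlinarith [dist_nonneg (x := m) (y := G.g u v t)]
  exact dist_eq_zero.mp this

/-- The geodesic is an isometric embedding of the interval. -/
lemma GeodesicStructure.isom (G : GeodesicStructure X) (y w : X) {a b : ℝ}
    (ha : a ∈ Set.Icc (0:ℝ) 1) (hb : b ∈ Set.Icc (0:ℝ) 1) (hab : a ≤ b) :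
    dist (G.g y w a) (G.g y w b) = (b - a) * dist y w := by
  have h1 := G.dist_left y w a ha
  have h2 := G.dist_left y w b hb
  have h3 := G.dist_right y w a ha
  have hcn := G.cn y w (G.g y w a) b hb
  rw [dist_comm (G.g y w a) y, dist_comm (G.g y w a) w, h1, h3] at hcn
  have hd := dist_nonneg (x := y) (y := w)
  have htr := dist_triangle y (G.g y w a) (G.g y w b)
  rw [h1, h2] at htr
  have hub : dist (G.g y w a) (G.g y w b) ≤ (b - a) * dist y w := by
    apply sq_le_imp_le dist_nonneg (mul_nonneg (by linarith) hd)
    have hz : (1 - b) * (a * dist y w) ^ 2 + b * ((1 - a) * dist y w) ^ 2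
        - b * (1 - b) * dist y w ^ 2 = ((b - a) * dist y w) ^ 2 := by ring
    linarith
  linarith

/-- The geodesic segment is convex. -/
lemma seg_convex (G : GeodesicStructure X) (y w : X) {u v : X}
    (hu : u ∈ (fun t => G.g y w t) '' Set.Icc (0:ℝ) 1)
    (hv : v ∈ (fun t => G.g y w t) '' Set.Icc (0:ℝ) 1)
    {t : ℝ} (ht : t ∈ Set.Icc (0:ℝ) 1) :
    G.g u v t ∈ (fun t => G.g y w t) '' Set.Icc (0:ℝ) 1 := by
  obtain ⟨a, ha, rfl⟩ := hu
  obtain ⟨b, hb, rfl⟩ := hv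
  obtain ⟨ht0, ht1⟩ := ht
  refine ⟨a + t * (b - a), ⟨by nlinarith [ha.1, hb.1], by nlinarith [ha.2, hb.2]⟩, ?_⟩
  have hc : a + t * (b - a) ∈ Set.Icc (0:ℝ) 1 :=
    ⟨by nlinarith [ha.1, hb.1], by nlinarith [ha.2, hb.2]⟩
  rcases le_total a b with hab | hab
  · have hac : a ≤ a + t * (b - a) := by nlinarith
    have hcb : a + t * (b - a) ≤ b := by nlinarith
    have e1 : dist (G.g y w a) (G.g y w (a + t * (b - a)))
        = t * dist (G.g y w a) (G.g y w b) := by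
      rw [G.isom y w ha hc hac, G.isom y w ha hb hab]; ring
    have e2 : dist (G.g y w b) (G.g y w (a + t * (b - a)))
        = (1 - t) * dist (G.g y w a) (G.g y w b) := by
      rw [dist_comm (G.g y w b), G.isom y w hc hb hcb, G.isom y w ha hb hab]; ring
    exact G.unique ⟨ht0, ht1⟩ e1 e2
  · have hca : a + t * (b - a) ≤ a := by nlinarith
    have hbc : b ≤ a + t * (b - a) := by nlinarith
    have e1 : dist (G.g y w a) (G.g y w (a + t * (b - a)))
        = t * dist (G.g y w a) (G.g y w b) := by
      rw [dist_comm (G.g y w a), G.isom y w hc ha hca, dist_comm (G.g y w a),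
        G.isom y w hb ha hab]; ring
    have e2 : dist (G.g y w b) (G.g y w (a + t * (b - a)))
        = (1 - t) * dist (G.g y w a) (G.g y w b) := by
      rw [G.isom y w hb hc hbc, dist_comm (G.g y w a), G.isom y w hb ha hab]; ring
    exact G.unique ⟨ht0, ht1⟩ e1 e2

/-- Pythagorean inequality for metric projections onto convex sets. -/
lemma proj_pythag (G : GeodesicStructure X) {p : X → X} {I : Set X}
    (hp : IsMetricProjOn p I)
    (hconv : ∀ u v : X, u ∈ I → v ∈ I → ∀ t ∈ Set.Icc (0:ℝ) 1, G.g u v t ∈ I)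
    (z u : X) (hu : u ∈ I) :
    dist (p z) u ^ 2 ≤ dist z u ^ 2 - dist z (p z) ^ 2 := by
  have key : ∀ t : ℝ, 0 < t → t ≤ 1 →
      dist (p z) u ^ 2 ≤ dist z u ^ 2 - dist z (p z) ^ 2 + t * dist (p z) u ^ 2 := by
    intro t ht0 ht1
    have htI : t ∈ Set.Icc (0:ℝ) 1 := ⟨ht0.le, ht1⟩
    have hm := hconv (p z) u (hp z).1 hu t htI
    have hmin := (hp z).2 _ hm
    have hcn := G.cn (p z) u z t htI
    have hsq : dist z (p z) ^ 2 ≤ dist z (G.g (p z) u t) ^ 2 :=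
      pow_le_pow_left₀ dist_nonneg hmin 2
    nlinarith [hsq, hcn, ht0]
  refine le_of_forall_pos_le_add ?_
  intro ε hε
  have hBnn : (0:ℝ) ≤ dist (p z) u ^ 2 := sq_nonneg _
  have ht0 : 0 < min 1 (ε / (dist (p z) u ^ 2 + 1)) :=
    lt_min one_pos (div_pos hε (by linarith))
  have h := key _ ht0 (min_le_left _ _)
  have hle : min 1 (ε / (dist (p z) u ^ 2 + 1)) * dist (p z) u ^ 2 ≤ ε := by
    have h2 : min 1 (ε / (dist (p z) u ^ 2 + 1)) ≤ ε / (dist (p z) u ^ 2 + 1) :=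
      min_le_right _ _
    have h3 : min 1 (ε / (dist (p z) u ^ 2 + 1)) * (dist (p z) u ^ 2 + 1)
        ≤ (ε / (dist (p z) u ^ 2 + 1)) * (dist (p z) u ^ 2 + 1) :=
      mul_le_mul_of_nonneg_right h2 (by linarith)
    rw [div_mul_cancel₀ _ (by positivity : dist (p z) u ^ 2 + 1 ≠ 0)] at h3
    nlinarith [ht0]
  linarith

/-- Berg–Nikolaev quadruple inequality, derived from the CN inequality. -/
lemma quad_ineq (G : GeodesicStructure X) (x y p q : X) :
    dist x y ^ 2 + dist p q ^ 2 ≤ dist p y ^ 2 + dist q x ^ 2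
      + 2 * dist p x * dist q y := by
  by_cases hpx : dist p x = 0
  · have hp : p = x := dist_eq_zero.mp hpx
    subst hp
    rw [dist_self, dist_comm p q]
    nlinarith [sq_nonneg (dist q p)]
  by_cases hqy : dist q y = 0
  · have hq : q = y := dist_eq_zero.mp hqy
    subst hq
    rw [dist_self, dist_comm x q]
    nlinarith
  have ha : 0 < dist p x := (dist_nonneg).lt_of_ne (Ne.symm hpx)
  have hb : 0 < dist q y := (dist_nonneg).lt_of_ne (Ne.symm hqy)
  have hs : 0 < dist p x + dist q y := by linarith
  set t : ℝ := dist p x / (dist p x + dist q y) with htdef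
  have ht0 : 0 < t := div_pos ha hs
  have ht1 : t < 1 := (div_lt_one hs).mpr (by linarith)
  have htI : t ∈ Set.Icc (0:ℝ) 1 := ⟨ht0.le, ht1.le⟩
  have hcn1 := G.cn p q (G.g x y t) t htI
  have hcn2 := G.cn x y p t htI
  have hcn3 := G.cn x y q t htI
  rw [dist_comm (G.g x y t) p, dist_comm (G.g x y t) q] at hcn1
  have h0 := sq_nonneg (dist (G.g x y t) (G.g p q t))
  have e2 := mul_le_mul_of_nonneg_left hcn2 (by linarith : (0:ℝ) ≤ 1 - t)
  have e3 := mul_le_mul_of_nonneg_left hcn3 ht0.le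
  have htb : (1 - t) * dist p x = t * dist q y := by
    rw [htdef]; field_simp; ring
  have hE : t * (1 - t) * (dist x y ^ 2 + dist p q ^ 2)
      ≤ (1 - t) ^ 2 * dist p x ^ 2
        + t * (1 - t) * (dist p y ^ 2 + dist q x ^ 2) + t ^ 2 * dist q y ^ 2 := by
    nlinarith [h0, hcn1, e2, e3]
  have k1 : (1 - t) ^ 2 * dist p x ^ 2 = t * (1 - t) * (dist p x * dist q y) := by
    calc (1 - t) ^ 2 * dist p x ^ 2
        = ((1 - t) * dist p x) * ((1 - t) * dist p x) := by ring
      _ = (t * dist q y) * ((1 - t) * dist p x) := by rw [htb]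
      _ = t * (1 - t) * (dist p x * dist q y) := by ring
  have k2 : t ^ 2 * dist q y ^ 2 = t * (1 - t) * (dist p x * dist q y) := by
    calc t ^ 2 * dist q y ^ 2
        = (t * dist q y) * (t * dist q y) := by ring
      _ = ((1 - t) * dist p x) * (t * dist q y) := by rw [htb]
      _ = t * (1 - t) * (dist p x * dist q y) := by ring
  have hpos : 0 < t * (1 - t) := mul_pos ht0 (by linarith)
  have hfin : t * (1 - t) * (dist x y ^ 2 + dist p q ^ 2)
      ≤ t * (1 - t) * (dist p y ^ 2 + dist q x ^ 2 + 2 * dist p x * dist q y) := by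
    nlinarith [hE, k1, k2]
  exact le_of_mul_le_mul_left hfin hpos

/-- The metric projection onto a convex set is nonexpansive. -/
lemma proj_nonexpansive (G : GeodesicStructure X) {p : X → X} {I : Set X}
    (hp : IsMetricProjOn p I)
    (hconv : ∀ u v : X, u ∈ I → v ∈ I → ∀ t ∈ Set.Icc (0:ℝ) 1, G.g u v t ∈ I)
    (z z' : X) : dist (p z) (p z') ≤ dist z z' := by
  have h1 := proj_pythag G hp hconv z (p z') (hp z').1
  have h2 := proj_pythag G hp hconv z' (p z) (hp z).1
  have h3 := quad_ineq G z (p z') z' (p z)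
  rw [dist_comm (p z') (p z)] at h2
  rw [dist_comm z' z, dist_comm (p z) z] at h3
  nlinarith [h1, h2, h3, dist_nonneg (x := z) (y := z'),
    dist_nonneg (x := p z) (y := p z'),
    sq_nonneg (dist z z' - dist (p z) (p z'))]

end Aux

/-- Δ-convergence Tauberian theorem: if the Vallée-Poussin Karcher means `σ n k`
Δ-converge to `y` uniformly in `k` (via projections onto geodesics issuing from `y`)
and `d(xₙ, x_{n+1}) → 0`, then `xₙ` Δ-converges to `y`. -/
theorem delta_almost_convergence_asymp_regular_implies_delta_convergence
    {X : Type*} [MetricSpace X] [CompleteSpace X]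
    (G : GeodesicStructure X) (x : ℕ → X) (σ : ℕ → ℕ → X)
    (hσ : ∀ n k : ℕ, 1 ≤ n → ∀ z : X,
      (1 / n : ℝ) * ∑ i ∈ Finset.range n, dist (x (k + i)) (σ n k) ^ 2
        ≤ (1 / n : ℝ) * ∑ i ∈ Finset.range n, dist (x (k + i)) z ^ 2)
    (y : X)
    (hunif : ∀ (w : X) (p : X → X),
      IsMetricProjOn p ((fun t => G.g y w t) '' Set.Icc (0:ℝ) 1) →
      ∀ ε > (0:ℝ), ∃ N : ℕ, ∀ n ≥ N, ∀ k : ℕ, dist y (p (σ n k)) < ε)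
    (hreg : Tendsto (fun n => dist (x n) (x (n + 1))) atTop (nhds 0)) :
    ∀ (w : X) (p : X → X),
      IsMetricProjOn p ((fun t => G.g y w t) '' Set.Icc (0:ℝ) 1) →
      Tendsto (fun n => dist y (p (x n))) atTop (nhds 0) := by
  intro w p hproj
  have hconv : ∀ u v : X, u ∈ ((fun t => G.g y w t) '' Set.Icc (0:ℝ) 1) →
      v ∈ ((fun t => G.g y w t) '' Set.Icc (0:ℝ) 1) →
      ∀ t ∈ Set.Icc (0:ℝ) 1, G.g u v t ∈ ((fun t => G.g y w t) '' Set.Icc (0:ℝ) 1) :=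
    fun u v hu hv t ht => seg_convex G y w hu hv ht
  have hne : ∀ z z' : X, dist (p z) (p z') ≤ dist z z' :=
    proj_nonexpansive G hproj hconv
  rw [Metric.tendsto_atTop]
  intro ε hε
  obtain ⟨N, hN⟩ := hunif w p hproj (ε / 2) (by linarith)
  set n := max N 1 with hndef
  have hn1 : 1 ≤ n := le_max_right _ _
  have hnN : N ≤ n := le_max_left _ _
  have hn1R : (1:ℝ) ≤ (n:ℝ) := by exact_mod_cast hn1
  set δ : ℝ := ε / (2 * ((n:ℝ) ^ 2 + 1)) with hδdef
  have hδpos : 0 < δ := by rw [hδdef]; positivity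
  obtain ⟨K, hK⟩ := (Metric.tendsto_atTop.mp hreg) δ hδpos
  refine ⟨K, fun k hk => ?_⟩
  have hstep : ∀ m, K ≤ m → dist (x m) (x (m + 1)) ≤ δ := by
    intro m hm
    have := hK m hm
    rw [Real.dist_eq, sub_zero, abs_of_nonneg dist_nonneg] at this
    exact this.le
  have hchain : ∀ i : ℕ, dist (x k) (x (k + i)) ≤ (i : ℝ) * δ := by
    intro i
    induction i with
    | zero => simp
    | succ j ih =>
      have h := hstep (k + j) (le_trans hk (Nat.le_add_right _ _))
      have htri := dist_triangle (x k) (x (k + j)) (x (k + j + 1))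
      have : (k + (j + 1)) = (k + j) + 1 := rfl
      rw [this]
      push_cast
      calc dist (x k) (x (k + j + 1))
          ≤ dist (x k) (x (k + j)) + dist (x (k + j)) (x (k + j + 1)) := htri
        _ ≤ (j : ℝ) * δ + δ := add_le_add ih h
        _ = ((j : ℝ) + 1) * δ := by ring
  -- bound dist (x k) (σ n k)
  have hsum := hσ n k hn1 (x k)
  have hinv : (0:ℝ) < 1 / (n : ℝ) := by positivity
  have hS : ∑ i ∈ Finset.range n, dist (x (k + i)) (σ n k) ^ 2
      ≤ ∑ i ∈ Finset.range n, dist (x (k + i)) (x k) ^ 2 :=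
    le_of_mul_le_mul_left hsum hinv
  have hterm : ∀ i ∈ Finset.range n, dist (x (k + i)) (x k) ^ 2 ≤ ((n:ℝ) * δ) ^ 2 := by
    intro i hi
    have h1 : dist (x k) (x (k + i)) ≤ (i : ℝ) * δ := hchain i
    have h2 : (i : ℝ) * δ ≤ (n : ℝ) * δ := by
      have : (i : ℝ) ≤ (n : ℝ) := by
        exact_mod_cast (Finset.mem_range.mp hi).le
      exact mul_le_mul_of_nonneg_right this hδpos.le
    rw [dist_comm]
    exact pow_le_pow_left₀ dist_nonneg (h1.trans h2) 2
  have hS2 : ∑ i ∈ Finset.range n, dist (x (k + i)) (x k) ^ 2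
      ≤ (n : ℝ) * ((n:ℝ) * δ) ^ 2 := by
    calc ∑ i ∈ Finset.range n, dist (x (k + i)) (x k) ^ 2
        ≤ ∑ _i ∈ Finset.range n, ((n:ℝ) * δ) ^ 2 := Finset.sum_le_sum hterm
      _ = (n : ℝ) * ((n:ℝ) * δ) ^ 2 := by
          rw [Finset.sum_const, Finset.card_range, nsmul_eq_mul]
  have hx0 : dist (x k) (σ n k) ^ 2
      ≤ ∑ i ∈ Finset.range n, dist (x (k + i)) (σ n k) ^ 2 := by
    have := Finset.single_le_sum (f := fun i => dist (x (k + i)) (σ n k) ^ 2)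
      (fun i _ => sq_nonneg _) (Finset.mem_range.mpr (Nat.lt_of_lt_of_le Nat.zero_lt_one hn1))
    simpa using this
  have hsq : dist (x k) (σ n k) ^ 2 ≤ ((n:ℝ) ^ 2 * δ) ^ 2 := by
    have hn3 : (n : ℝ) * ((n:ℝ) * δ) ^ 2 ≤ ((n:ℝ) ^ 2 * δ) ^ 2 := by
      nlinarith [hδpos.le, sq_nonneg δ, hn1R]
    linarith
  have hbound : dist (x k) (σ n k) ≤ (n:ℝ) ^ 2 * δ :=
    sq_le_imp_le dist_nonneg (by positivity) hsq
  have h4 : (n:ℝ) ^ 2 * δ < ε / 2 := by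
    have heq : ((n:ℝ) ^ 2 + 1) * δ = ε / 2 := by
      rw [hδdef]; field_simp
    nlinarith [hδpos]
  have h1 : dist y (p (σ n k)) < ε / 2 := hN n hnN k
  have h2 : dist (p (σ n k)) (p (x k)) ≤ dist (σ n k) (x k) := hne _ _
  have h3 : dist y (p (x k)) ≤ dist y (p (σ n k)) + dist (p (σ n k)) (p (x k)) :=
    dist_triangle _ _ _
  have hgoal : dist y (p (x k)) < ε := by
    rw [dist_comm (σ n k) (x k)] at h2
    linarith
  rw [Real.dist_eq, sub_zero, abs_of_nonneg dist_nonneg]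
  exact hgoal
end

section
/- Let {x_n} be a bounded sequence in a Hilbert space H such that the Cesàro means (1/n) Σ_{i=0}^{n-1} x_i converge in norm to y and n‖x_n − x_{n−1}‖ → 0. Then x_n converges in norm to y. -/
open Finset Filter

lemma hilbert_tauberian_key {H : Type*} [NormedAddCommGroup H] [Module ℝ H]
    (x : ℕ → H) (n : ℕ) :
    ∑ k ∈ Finset.range (n + 1), (k : ℝ) • (x k - x (k - 1))
      = (n : ℝ) • x n - ∑ i ∈ Finset.range n, x i := by
  induction n with
  | zero => simp
  | succ n ih =>
    rw [Finset.sum_range_succ, ih, Finset.sum_range_succ]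
    have h : (n + 1) - 1 = n := rfl
    rw [h]
    push_cast
    module

/-- Hilbert-space Tauberian theorem: Cesàro convergence plus `n‖xₙ − x_{n−1}‖ → 0`
implies norm convergence. -/
theorem hilbert_tauberian
    {H : Type*} [NormedAddCommGroup H] [InnerProductSpace ℝ H]
    (x : ℕ → H) (hbdd : Bornology.IsBounded (Set.range x)) (y : H)
    (hmean : Tendsto (fun n : ℕ => (1 / n : ℝ) • ∑ i ∈ Finset.range n, x i)
      atTop (nhds y))
    (htau : Tendsto (fun n : ℕ => (n : ℝ) * ‖x n - x (n - 1)‖) atTop (nhds 0)) :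
    Tendsto x atTop (nhds y) := by
  set b : ℕ → ℝ := fun n => (n : ℝ) * ‖x n - x (n - 1)‖ with hbdef
  -- Cesàro mean of b tends to 0
  have hc1 : Tendsto (fun n : ℕ => (n : ℝ)⁻¹ * ∑ k ∈ Finset.range n, b k)
      atTop (nhds 0) := htau.cesaro
  have hc2 : Tendsto (fun n : ℕ => (n : ℝ)⁻¹ * b n) atTop (nhds 0) := by
    simpa using tendsto_inv_atTop_nhds_zero_nat.mul htau
  have hc : Tendsto (fun n : ℕ => (n : ℝ)⁻¹ * ∑ k ∈ Finset.range (n + 1), b k)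
      atTop (nhds 0) := by
    have := hc1.add hc2
    simp only [add_zero] at this
    refine this.congr fun n => ?_
    rw [Finset.sum_range_succ, mul_add]
  -- the difference x n - mean tends to 0
  have hdiff : Tendsto (fun n : ℕ => x n - (1 / n : ℝ) • ∑ i ∈ Finset.range n, x i)
      atTop (nhds 0) := by
    refine squeeze_zero_norm' ?_ hc
    filter_upwards [eventually_ge_atTop 1] with n hn
    have hn0 : (n : ℝ) ≠ 0 := by positivity
    have heq : x n - (1 / n : ℝ) • ∑ i ∈ Finset.range n, x i
        = (1 / n : ℝ) • ((n : ℝ) • x n - ∑ i ∈ Finset.range n, x i) := by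
      rw [smul_sub, smul_smul]
      field_simp
      rw [one_smul]
    rw [heq, ← hilbert_tauberian_key x n, norm_smul]
    have h1 : ‖(1 / n : ℝ)‖ = (n : ℝ)⁻¹ := by
      rw [Real.norm_eq_abs, abs_of_nonneg (by positivity), one_div]
    rw [h1]
    gcongr
    calc ‖∑ k ∈ Finset.range (n + 1), (k : ℝ) • (x k - x (k - 1))‖
        ≤ ∑ k ∈ Finset.range (n + 1), ‖(k : ℝ) • (x k - x (k - 1))‖ :=
          norm_sum_le _ _
      _ = ∑ k ∈ Finset.range (n + 1), b k := by
          refine Finset.sum_congr rfl fun k _ => ?_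
          rw [norm_smul, Real.norm_natCast]
  have := hmean.add hdiff
  simp only [add_zero] at this
  refine this.congr fun n => ?_
  abel
end

section
/- Let {x_n} be an N-periodic sequence in a Hadamard space (x_{n+N} = x_n for all n). Then the Vallée-Poussin Karcher means σ_n^k converge to σ_N, the Karcher mean of x_0, …, x_{N-1}, as n → ∞ uniformly in k ≥ 0; i.e., an N-periodic sequence almost converges to the Karcher mean of its first N points. -/
open Finset Filter Metric

/-- Variance inequality: if `σ` minimizes the sum of squared distances, then for any `z`,
`n * d(σ,z)² ≤ F(z) - F(σ)`. -/
lemma variance_ineq {X : Type*} [MetricSpace X] (G : GeodesicStructure X)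
    (y : ℕ → X) (n : ℕ) (σ z : X)
    (hmin : ∀ w : X, ∑ i ∈ Finset.range n, dist (y i) σ ^ 2
      ≤ ∑ i ∈ Finset.range n, dist (y i) w ^ 2) :
    (n : ℝ) * dist σ z ^ 2 ≤ ∑ i ∈ Finset.range n, dist (y i) z ^ 2
      - ∑ i ∈ Finset.range n, dist (y i) σ ^ 2 := by
  set A := ∑ i ∈ Finset.range n, dist (y i) σ ^ 2 with hA
  set B := ∑ i ∈ Finset.range n, dist (y i) z ^ 2 with hB
  set D : ℝ := (n : ℝ) * dist σ z ^ 2 with hD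
  have key : ∀ t : ℝ, 0 < t → t ≤ 1 → (1 - t) * D ≤ B - A := by
    intro t ht0 ht1
    have ht' : t ∈ Set.Icc (0:ℝ) 1 := ⟨le_of_lt ht0, ht1⟩
    have hsum : ∑ i ∈ Finset.range n, dist (y i) (G.g σ z t) ^ 2
        ≤ (1 - t) * A + t * B - t * (1 - t) * D := by
      calc ∑ i ∈ Finset.range n, dist (y i) (G.g σ z t) ^ 2
          ≤ ∑ i ∈ Finset.range n,
              ((1 - t) * dist (y i) σ ^ 2 + t * dist (y i) z ^ 2
                - t * (1 - t) * dist σ z ^ 2) :=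
            Finset.sum_le_sum (fun i _ => G.cn σ z (y i) t ht')
        _ = (1 - t) * A + t * B - t * (1 - t) * D := by
            rw [Finset.sum_sub_distrib, Finset.sum_add_distrib, ← Finset.mul_sum,
              ← Finset.mul_sum, Finset.sum_const, Finset.card_range, nsmul_eq_mul, hD]
            ring
    have h2 := hmin (G.g σ z t)
    nlinarith
  have hD0 : 0 ≤ D := by positivity
  rcases eq_or_lt_of_le hD0 with h | h
  · have hAB : A ≤ B := hmin z
    linarith
  · refine le_of_forall_pos_le_add ?_
    intro ε hε
    set t : ℝ := min 1 (ε / D) with htdef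
    have ht0 : 0 < t := lt_min one_pos (div_pos hε h)
    have ht1 : t ≤ 1 := min_le_left _ _
    have htD : t * D ≤ ε := by
      have : t ≤ ε / D := min_le_right _ _
      calc t * D ≤ (ε / D) * D := by nlinarith
        _ = ε := by field_simp
    have := key t ht0 ht1
    nlinarith

/-- Sum over one period of a periodic function is shift-invariant. -/
lemma period_sum_shift (f : ℕ → ℝ) (N : ℕ) (hf : ∀ m, f (m + N) = f m) :
    ∀ k, ∑ i ∈ Finset.range N, f (k + i) = ∑ i ∈ Finset.range N, f i := by
  intro k
  induction k with
  | zero => simp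
  | succ k ih =>
    have h1 : ∑ i ∈ Finset.range (N + 1), f (k + i)
        = ∑ i ∈ Finset.range N, f (k + i) + f (k + N) := Finset.sum_range_succ _ N
    have h2 : ∑ i ∈ Finset.range (N + 1), f (k + i)
        = (∑ i ∈ Finset.range N, f (k + (i + 1))) + f (k + 0) := Finset.sum_range_succ' _ N
    have h3 : ∑ i ∈ Finset.range N, f (k + 1 + i) = ∑ i ∈ Finset.range N, f (k + (i + 1)) := by
      apply Finset.sum_congr rfl
      intro i _
      congr 1
      omega
    have h4 : f (k + N) = f (k + 0) := by simpa using hf k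
    rw [h3]
    have : (∑ i ∈ Finset.range N, f (k + (i + 1))) = ∑ i ∈ Finset.range N, f (k + i) := by
      linarith [h1, h2, h4]
    rw [this, ih]

/-- Sum over `q` full periods. -/
lemma block_sum (f : ℕ → ℝ) (N : ℕ) (hf : ∀ m, f (m + N) = f m) (k : ℕ) :
    ∀ q : ℕ, ∑ i ∈ Finset.range (N * q), f (k + i) = q * ∑ i ∈ Finset.range N, f i := by
  intro q
  induction q with
  | zero => simp
  | succ q ih =>
    have hNq : N * (q + 1) = N * q + N := by ring
    rw [hNq, Finset.sum_range_add]
    have : ∑ i ∈ Finset.range N, f (k + (N * q + i))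
        = ∑ i ∈ Finset.range N, f i := by
      have := period_sum_shift f N hf (k + N * q)
      rw [← this]
      apply Finset.sum_congr rfl
      intro i _
      congr 1
      omega
    rw [ih, this]
    push_cast
    ring

/-- An `N`-periodic sequence in a Hadamard space almost converges to the Karcher
mean `σ_N` of its first `N` points: `σ' n k → σ_N` uniformly in `k`. -/
theorem periodic_almost_converges_to_karcher_mean
    {X : Type*} [MetricSpace X] [CompleteSpace X]
    (G : GeodesicStructure X) (x : ℕ → X) (N : ℕ) (hN : 0 < N)
    (hper : ∀ n : ℕ, x (n + N) = x n)
    (σN : X)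
    (hσN : ∀ z : X,
      (1 / N : ℝ) * ∑ i ∈ Finset.range N, dist (x i) σN ^ 2
        ≤ (1 / N : ℝ) * ∑ i ∈ Finset.range N, dist (x i) z ^ 2)
    (σ' : ℕ → ℕ → X)
    (hσ' : ∀ n k : ℕ, 1 ≤ n → ∀ z : X,
      (1 / n : ℝ) * ∑ i ∈ Finset.range n, dist (x (k + i)) (σ' n k) ^ 2
        ≤ (1 / n : ℝ) * ∑ i ∈ Finset.range n, dist (x (k + i)) z ^ 2) :
    ∀ ε > (0:ℝ), ∃ M : ℕ, ∀ n ≥ M, ∀ k : ℕ, dist (σ' n k) σN < ε := by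
  intro ε hε
  -- x at any index equals x at index mod N
  have hxmod : ∀ m, x m = x (m % N) := by
    intro m
    induction m using Nat.strong_induction_on with
    | _ m ih =>
      by_cases h : m < N
      · rw [Nat.mod_eq_of_lt h]
      · have hm : m = (m - N) + N := by omega
        rw [hm, hper, ih (m - N) (by omega), Nat.add_mod_right]
  set S := ∑ i ∈ Finset.range N, dist (x i) σN ^ 2 with hSdef
  have hS0 : 0 ≤ S := Finset.sum_nonneg (fun i _ => by positivity)
  -- σN minimizes the unnormalized sum over one period
  have hσNmin : ∀ z : X, S ≤ ∑ i ∈ Finset.range N, dist (x i) z ^ 2 := by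
    intro z
    have h := hσN z
    have hpos : (0:ℝ) < 1 / N := by positivity
    exact (mul_le_mul_iff_right₀ hpos).mp h
  -- each squared distance to σN is at most S
  have hterm : ∀ m, dist (x m) σN ^ 2 ≤ S := by
    intro m
    rw [hxmod m]
    exact Finset.single_le_sum (f := fun i => dist (x i) σN ^ 2)
      (fun i _ => by positivity) (Finset.mem_range.mpr (Nat.mod_lt m hN))
  obtain ⟨M0, hM0⟩ := exists_nat_gt ((N : ℝ) * S / ε ^ 2)
  refine ⟨M0 + 1, fun n hn k => ?_⟩
  have hn1 : 1 ≤ n := by omega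
  set σ := σ' n k with hσdef
  -- unnormalized minimality of σ
  have hmin : ∀ w : X, ∑ i ∈ Finset.range n, dist (x (k + i)) σ ^ 2
      ≤ ∑ i ∈ Finset.range n, dist (x (k + i)) w ^ 2 := by
    intro w
    have h := hσ' n k hn1 w
    have hpos : (0:ℝ) < 1 / n := by positivity
    exact (mul_le_mul_iff_right₀ hpos).mp h
  have hvar := variance_ineq G (fun i => x (k + i)) n σ σN hmin
  set q := n / N with hq
  set r := n % N with hr
  have hqr : N * q + r = n := Nat.div_add_mod n N
  have hrN : r < N := Nat.mod_lt n hN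
  -- periodicity of the squared-distance functions
  have hperσN : ∀ m, dist (x (m + N)) σN ^ 2 = dist (x m) σN ^ 2 := by
    intro m; rw [hper]
  have hperσ : ∀ m, dist (x (m + N)) σ ^ 2 = dist (x m) σ ^ 2 := by
    intro m; rw [hper]
  -- Upper bound on B := sum to σN
  have hB : ∑ i ∈ Finset.range n, dist (x (k + i)) σN ^ 2 ≤ (q : ℝ) * S + (N : ℝ) * S := by
    have hsplit : ∑ i ∈ Finset.range n, dist (x (k + i)) σN ^ 2
        = ∑ i ∈ Finset.range (N * q), dist (x (k + i)) σN ^ 2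
          + ∑ i ∈ Finset.range r, dist (x (k + (N * q + i))) σN ^ 2 := by
      rw [← hqr]
      exact Finset.sum_range_add (fun i => dist (x (k + i)) σN ^ 2) (N * q) r
    rw [hsplit, block_sum (fun m => dist (x m) σN ^ 2) N hperσN k q]
    have htail : ∑ i ∈ Finset.range r, dist (x (k + (N * q + i))) σN ^ 2 ≤ (N : ℝ) * S := by
      calc ∑ i ∈ Finset.range r, dist (x (k + (N * q + i))) σN ^ 2
          ≤ ∑ _i ∈ Finset.range r, S := Finset.sum_le_sum (fun i _ => hterm _)
        _ = (r : ℝ) * S := by rw [Finset.sum_const, Finset.card_range, nsmul_eq_mul]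
        _ ≤ (N : ℝ) * S := by
            have : (r : ℝ) ≤ (N : ℝ) := by exact_mod_cast hrN.le
            nlinarith
    · linarith
  -- Lower bound on A := sum to σ
  have hA : (q : ℝ) * S ≤ ∑ i ∈ Finset.range n, dist (x (k + i)) σ ^ 2 := by
    have hsplit : ∑ i ∈ Finset.range n, dist (x (k + i)) σ ^ 2
        = ∑ i ∈ Finset.range (N * q), dist (x (k + i)) σ ^ 2
          + ∑ i ∈ Finset.range r, dist (x (k + (N * q + i))) σ ^ 2 := by
      rw [← hqr]
      exact Finset.sum_range_add (fun i => dist (x (k + i)) σ ^ 2) (N * q) r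
    have htail0 : 0 ≤ ∑ i ∈ Finset.range r, dist (x (k + (N * q + i))) σ ^ 2 :=
      Finset.sum_nonneg (fun i _ => by positivity)
    have hblock : ∑ i ∈ Finset.range (N * q), dist (x (k + i)) σ ^ 2
        = (q : ℝ) * ∑ i ∈ Finset.range N, dist (x i) σ ^ 2 :=
      block_sum (fun m => dist (x m) σ ^ 2) N hperσ k q
    have hge : S ≤ ∑ i ∈ Finset.range N, dist (x i) σ ^ 2 := hσNmin σ
    have hq0 : (0:ℝ) ≤ (q : ℝ) := Nat.cast_nonneg q
    rw [hsplit, hblock]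
    nlinarith
  -- Combine: n * d² ≤ N * S
  have hmain : (n : ℝ) * dist σ σN ^ 2 ≤ (N : ℝ) * S := by linarith
  -- Finish: n > N*S/ε²
  have hncast : ((M0 : ℝ) + 1) ≤ (n : ℝ) := by exact_mod_cast hn
  have hnbig : (N : ℝ) * S / ε ^ 2 < (n : ℝ) := by linarith
  have hn0 : (0:ℝ) < (n : ℝ) := by exact_mod_cast hn1
  have hNS : (N : ℝ) * S < (n : ℝ) * ε ^ 2 := by
    have := (div_lt_iff₀ (by positivity : (0:ℝ) < ε ^ 2)).mp hnbig
    nlinarith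
  have hd2 : dist σ σN ^ 2 < ε ^ 2 := by nlinarith
  nlinarith [dist_nonneg (x := σ) (y := σN)]
end

section
/- Let (X, d) be a CAT(0) space. Then for all a, b, c, d ∈ X the quasilinearization ⟨ab, cd⟩ := ½(d²(a,d) + d²(b,c) − d²(a,c) − d²(b,d)) satisfies the Cauchy–Schwarz inequality ⟨ab, cd⟩ ≤ d(a,b)·d(c,d). -/
open Finset Filter Metric

private lemma le_of_sq_le_sq' {a b : ℝ} (h : a ^ 2 ≤ b ^ 2) (ha : 0 ≤ a) (hb : 0 ≤ b) :
    a ≤ b := by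
  have h1 : Real.sqrt (a ^ 2) ≤ Real.sqrt (b ^ 2) := Real.sqrt_le_sqrt h
  rwa [Real.sqrt_sq ha, Real.sqrt_sq hb] at h1

/-- Weak (AM-GM) four point inequality: `2⟨xy, zw⟩ ≤ d(x,y)² + d(z,w)²`.
Proved using the CN inequality at the midpoint of `[y,z]`. -/
private lemma weak_quadruple {X : Type*} [MetricSpace X] (G : GeodesicStructure X)
    (x y z w : X) :
    dist x w ^ 2 + dist y z ^ 2 - dist x z ^ 2 - dist y w ^ 2
      ≤ dist x y ^ 2 + dist z w ^ 2 := by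
  have hmem : (1/2 : ℝ) ∈ Set.Icc (0:ℝ) 1 := by norm_num
  have h1 := G.cn y z x (1/2) hmem
  have h2 := G.cn y z w (1/2) hmem
  rw [dist_comm w y, dist_comm w z] at h2
  have h3 := dist_triangle x (G.g y z (1/2)) w
  have h4 : dist x w ^ 2 ≤ (dist x (G.g y z (1/2)) + dist (G.g y z (1/2)) w) ^ 2 :=
    pow_le_pow_left₀ dist_nonneg h3 2
  rw [dist_comm (G.g y z (1/2)) w] at h4
  nlinarith [sq_nonneg (dist x (G.g y z (1/2)) - dist w (G.g y z (1/2)))]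

/-- Distance between consecutive subdivision points of a geodesic. -/
private lemma piece_le {X : Type*} [MetricSpace X] (G : GeodesicStructure X)
    (x y : X) {n : ℕ} (hn : 0 < n) {i : ℕ} (hi : i < n) :
    dist (G.g x y ((i : ℝ)/(n : ℝ))) (G.g x y (((i+1 : ℕ) : ℝ)/(n : ℝ)))
      ≤ dist x y / n := by
  have hnR : (0:ℝ) < (n : ℝ) := by exact_mod_cast hn
  have hs : ((i : ℝ)/(n : ℝ)) ∈ Set.Icc (0:ℝ) 1 := by
    constructor
    · positivity
    · rw [div_le_one hnR]; exact_mod_cast hi.le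
  have ht : (((i+1 : ℕ) : ℝ)/(n : ℝ)) ∈ Set.Icc (0:ℝ) 1 := by
    constructor
    · positivity
    · rw [div_le_one hnR]; exact_mod_cast hi
  have hcn := G.cn x y (G.g x y ((i : ℝ)/(n : ℝ))) (((i+1 : ℕ) : ℝ)/(n : ℝ)) ht
  have e1 := G.dist_left x y ((i : ℝ)/(n : ℝ)) hs
  have e2 := G.dist_right x y ((i : ℝ)/(n : ℝ)) hs
  rw [dist_comm (G.g x y ((i : ℝ)/(n : ℝ))) x, dist_comm (G.g x y ((i : ℝ)/(n : ℝ))) y,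
    e1, e2] at hcn
  have hne : (n : ℝ) ≠ 0 := ne_of_gt hnR
  have heq : (1 - ((i+1 : ℕ) : ℝ)/(n : ℝ)) * (((i : ℝ)/(n : ℝ)) * dist x y) ^ 2
      + (((i+1 : ℕ) : ℝ)/(n : ℝ)) * ((1 - (i : ℝ)/(n : ℝ)) * dist x y) ^ 2
      - (((i+1 : ℕ) : ℝ)/(n : ℝ)) * (1 - ((i+1 : ℕ) : ℝ)/(n : ℝ)) * dist x y ^ 2
      = (dist x y / n) ^ 2 := by
    push_cast
    field_simp
    ring
  rw [heq] at hcn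
  exact le_of_sq_le_sq' hcn dist_nonneg (by positivity)

/-- Cauchy–Schwarz inequality for the quasilinearization in a CAT(0) space:
`⟨ab, cd⟩ ≤ d(a,b)·d(c,d)`. -/
theorem quasilinearization_cauchy_schwarz {X : Type*} [MetricSpace X]
    (G : GeodesicStructure X) (a b c d : X) :
    (dist a d ^ 2 + dist b c ^ 2 - dist a c ^ 2 - dist b d ^ 2) / 2
      ≤ dist a b * dist c d := by
  have hL0 : (0:ℝ) ≤ dist a b := dist_nonneg
  have hD0 : (0:ℝ) ≤ dist c d := dist_nonneg
  -- key subdivision estimate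
  have key : ∀ n m : ℕ, 0 < n → 0 < m →
      dist a d ^ 2 + dist b c ^ 2 - dist a c ^ 2 - dist b d ^ 2
        ≤ (m : ℝ) * dist a b ^ 2 / n + (n : ℝ) * dist c d ^ 2 / m := by
    intro n m hn hm
    have hnR : (0:ℝ) < (n : ℝ) := by exact_mod_cast hn
    have hmR : (0:ℝ) < (m : ℝ) := by exact_mod_cast hm
    set p : ℕ → X := fun i => G.g a b ((i : ℝ)/(n : ℝ)) with hp
    set q : ℕ → X := fun j => G.g c d ((j : ℝ)/(m : ℝ)) with hq
    -- endpoints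
    have hp0 : p 0 = a := by
      have h := G.dist_left a b 0 ⟨le_rfl, zero_le_one⟩
      rw [zero_mul] at h
      have e : p 0 = G.g a b 0 := by simp [hp]
      rw [← e] at h
      exact (dist_eq_zero.mp h).symm
    have hpn : p n = b := by
      have h := G.dist_right a b 1 ⟨zero_le_one, le_rfl⟩
      rw [sub_self, zero_mul] at h
      have e : p n = G.g a b 1 := by simp [hp, div_self (ne_of_gt hnR)]
      rw [← e] at h
      exact (dist_eq_zero.mp h).symm
    have hq0 : q 0 = c := by
      have h := G.dist_left c d 0 ⟨le_rfl, zero_le_one⟩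
      rw [zero_mul] at h
      have e : q 0 = G.g c d 0 := by simp [hq]
      rw [← e] at h
      exact (dist_eq_zero.mp h).symm
    have hqm : q m = d := by
      have h := G.dist_right c d 1 ⟨zero_le_one, le_rfl⟩
      rw [sub_self, zero_mul] at h
      have e : q m = G.g c d 1 := by simp [hq, div_self (ne_of_gt hmR)]
      rw [← e] at h
      exact (dist_eq_zero.mp h).symm
    -- per-piece bound
    have hT : ∀ i ∈ Finset.range n, ∀ j ∈ Finset.range m,
        (dist (p i) (q (j+1)) ^ 2 - dist (p i) (q j) ^ 2)
          - (dist (p (i+1)) (q (j+1)) ^ 2 - dist (p (i+1)) (q j) ^ 2)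
        ≤ (dist a b / n) ^ 2 + (dist c d / m) ^ 2 := by
      intro i hi j hj
      have hi' := Finset.mem_range.mp hi
      have hj' := Finset.mem_range.mp hj
      have hw := weak_quadruple G (p i) (p (i+1)) (q j) (q (j+1))
      have h1 : dist (p i) (p (i+1)) ≤ dist a b / n := piece_le G a b hn hi'
      have h2 : dist (q j) (q (j+1)) ≤ dist c d / m := piece_le G c d hm hj'
      have h1' : dist (p i) (p (i+1)) ^ 2 ≤ (dist a b / n) ^ 2 :=
        pow_le_pow_left₀ dist_nonneg h1 2
      have h2' : dist (q j) (q (j+1)) ^ 2 ≤ (dist c d / m) ^ 2 :=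
        pow_le_pow_left₀ dist_nonneg h2 2
      linarith
    -- telescoping
    have hsum1 : ∀ i : ℕ, ∑ j ∈ Finset.range m,
        ((dist (p i) (q (j+1)) ^ 2 - dist (p i) (q j) ^ 2)
          - (dist (p (i+1)) (q (j+1)) ^ 2 - dist (p (i+1)) (q j) ^ 2))
        = (dist (p i) (q m) ^ 2 - dist (p i) (q 0) ^ 2)
          - (dist (p (i+1)) (q m) ^ 2 - dist (p (i+1)) (q 0) ^ 2) := by
      intro i
      rw [Finset.sum_sub_distrib,
        Finset.sum_range_sub (fun j => dist (p i) (q j) ^ 2),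
        Finset.sum_range_sub (fun j => dist (p (i+1)) (q j) ^ 2)]
    have hsum2 : ∑ i ∈ Finset.range n,
        ((dist (p i) (q m) ^ 2 - dist (p i) (q 0) ^ 2)
          - (dist (p (i+1)) (q m) ^ 2 - dist (p (i+1)) (q 0) ^ 2))
        = (dist (p 0) (q m) ^ 2 - dist (p 0) (q 0) ^ 2)
          - (dist (p n) (q m) ^ 2 - dist (p n) (q 0) ^ 2) :=
      Finset.sum_range_sub' (fun i => dist (p i) (q m) ^ 2 - dist (p i) (q 0) ^ 2) n
    have htot : dist a d ^ 2 + dist b c ^ 2 - dist a c ^ 2 - dist b d ^ 2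
        = ∑ i ∈ Finset.range n, ∑ j ∈ Finset.range m,
            ((dist (p i) (q (j+1)) ^ 2 - dist (p i) (q j) ^ 2)
              - (dist (p (i+1)) (q (j+1)) ^ 2 - dist (p (i+1)) (q j) ^ 2)) := by
      have e : ∑ i ∈ Finset.range n, ∑ j ∈ Finset.range m,
            ((dist (p i) (q (j+1)) ^ 2 - dist (p i) (q j) ^ 2)
              - (dist (p (i+1)) (q (j+1)) ^ 2 - dist (p (i+1)) (q j) ^ 2))
          = (dist (p 0) (q m) ^ 2 - dist (p 0) (q 0) ^ 2)
            - (dist (p n) (q m) ^ 2 - dist (p n) (q 0) ^ 2) := by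
        rw [← hsum2]
        exact Finset.sum_congr rfl (fun i _ => hsum1 i)
      rw [e, hp0, hpn, hq0, hqm]
      ring
    have hbound : ∑ i ∈ Finset.range n, ∑ j ∈ Finset.range m,
          ((dist (p i) (q (j+1)) ^ 2 - dist (p i) (q j) ^ 2)
            - (dist (p (i+1)) (q (j+1)) ^ 2 - dist (p (i+1)) (q j) ^ 2))
        ≤ (n : ℝ) * ((m : ℝ) * ((dist a b / n) ^ 2 + (dist c d / m) ^ 2)) := by
      calc ∑ i ∈ Finset.range n, ∑ j ∈ Finset.range m,
            ((dist (p i) (q (j+1)) ^ 2 - dist (p i) (q j) ^ 2)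
              - (dist (p (i+1)) (q (j+1)) ^ 2 - dist (p (i+1)) (q j) ^ 2))
          ≤ ∑ i ∈ Finset.range n, ∑ j ∈ Finset.range m,
              ((dist a b / n) ^ 2 + (dist c d / m) ^ 2) := by
            apply Finset.sum_le_sum
            intro i hi
            exact Finset.sum_le_sum (fun j hj => hT i hi j hj)
        _ = (n : ℝ) * ((m : ℝ) * ((dist a b / n) ^ 2 + (dist c d / m) ^ 2)) := by
            simp only [Finset.sum_const, Finset.card_range, nsmul_eq_mul]
    have hfinal : (n : ℝ) * ((m : ℝ) * ((dist a b / n) ^ 2 + (dist c d / m) ^ 2))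
        = (m : ℝ) * dist a b ^ 2 / n + (n : ℝ) * dist c d ^ 2 / m := by
      field_simp
    rw [htot]
    rw [← hfinal]
    exact hbound
  -- optimize over n, m
  refine le_of_forall_pos_le_add ?_
  intro ε hε
  rcases eq_or_lt_of_le hD0 with hDz | hDpos
  · -- dist c d = 0 : take m = 1 and n large
    obtain ⟨n, hn⟩ := exists_nat_gt (dist a b ^ 2 / (2 * ε))
    have hge : (0:ℝ) ≤ dist a b ^ 2 / (2 * ε) := by positivity
    have hn0 : 0 < n := by
      by_contra h
      push_neg at h
      interval_cases n
      simp only [Nat.cast_zero] at hn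
      linarith
    have hk := key n 1 hn0 one_pos
    have hnR : (0:ℝ) < (n : ℝ) := by exact_mod_cast hn0
    have h1 : (1 : ℝ) * dist a b ^ 2 / n ≤ 2 * ε := by
      rw [one_mul, div_le_iff₀ hnR]
      have : dist a b ^ 2 / (2 * ε) < (n : ℝ) := hn
      rw [div_lt_iff₀ (by positivity)] at this
      linarith
    have h2 : (n : ℝ) * dist c d ^ 2 / 1 = 0 := by
      rw [← hDz]
      ring
    nlinarith [hk]
  · -- dist c d > 0
    obtain ⟨m, hm⟩ := exists_nat_gt (dist c d ^ 2 / (2 * ε))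
    have hge : (0:ℝ) ≤ dist c d ^ 2 / (2 * ε) := by positivity
    have hm0 : 0 < m := by
      by_contra h
      push_neg at h
      interval_cases m
      simp only [Nat.cast_zero] at hm
      linarith
    have hmR : (0:ℝ) < (m : ℝ) := by exact_mod_cast hm0
    set n : ℕ := max 1 (Nat.ceil ((m : ℝ) * dist a b / dist c d)) with hndef
    have hn0 : 0 < n := lt_of_lt_of_le one_pos (le_max_left _ _)
    have hnR : (0:ℝ) < (n : ℝ) := by exact_mod_cast hn0
    have hxnn : (0:ℝ) ≤ (m : ℝ) * dist a b / dist c d := by positivity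
    have hnlb : (m : ℝ) * dist a b / dist c d ≤ (n : ℝ) := by
      have h1 : ((Nat.ceil ((m : ℝ) * dist a b / dist c d) : ℕ) : ℝ)
          ≤ (n : ℝ) := by exact_mod_cast le_max_right 1 _
      exact le_trans (Nat.le_ceil _) h1
    have hnub : (n : ℝ) ≤ (m : ℝ) * dist a b / dist c d + 1 := by
      rw [hndef]
      push_cast [Nat.cast_max]
      apply max_le
      · linarith
      · exact (Nat.ceil_lt_add_one hxnn).le
    have hk := key n m hn0 hm0
    -- first term ≤ L * D
    have b1 : (m : ℝ) * dist a b ^ 2 / n ≤ dist a b * dist c d := by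
      rcases eq_or_lt_of_le hL0 with hLz | hLpos
      · rw [← hLz]
        simp
      · have hmla : (m : ℝ) * dist a b ≤ (n : ℝ) * dist c d := by
          rw [div_le_iff₀ hDpos] at hnlb
          linarith
        rw [div_le_iff₀ hnR]
        nlinarith
    -- second term ≤ L * D + 2ε
    have b2 : (n : ℝ) * dist c d ^ 2 / m ≤ dist a b * dist c d + 2 * ε := by
      have hde : (dist c d) ^ 2 / (m : ℝ) < 2 * ε := by
        rw [div_lt_iff₀ hmR]
        rw [div_lt_iff₀ (by positivity)] at hm
        linarith
      have h3 : (n : ℝ) * dist c d ^ 2 ≤ ((m : ℝ) * dist a b / dist c d + 1) * dist c d ^ 2 := by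
        apply mul_le_mul_of_nonneg_right hnub (by positivity)
      have h4 : ((m : ℝ) * dist a b / dist c d + 1) * dist c d ^ 2
          = (m : ℝ) * dist a b * dist c d + dist c d ^ 2 := by
        field_simp
      rw [div_le_iff₀ hmR]
      rw [h4] at h3
      have h5 : dist c d ^ 2 < 2 * ε * m := by
        rw [div_lt_iff₀ hmR] at hde
        linarith
      nlinarith
    linarith
end
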